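/- arXiv:2505.05866 — 8 statements merged into one kernel-verified Lean document; each statement's English description precedes it below -/
import Mathlib

section
/- The rule set 𝔍_c is sound and complete for the implication problem for certain independence atoms: for every finite set Σ of CIAs and every CIA σ over a relation schema R, Σ ⊨ σ if and only if Σ ⊢_{𝔍_c} σ. -/
/-- A relation schema over a finite attribute type `Attr`: each attribute has a
domain with a distinguished null symbol `*` and at least two non-null values. -/
structure Schema (Attr : Type) where
  Dom : Attr → Type
  null : ∀ A, Dom A
  two_nonnull : ∀ A, ∃ x y : Dom A, x ≠ null A ∧ y ≠ null A ∧ x ≠ y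

variable {Attr : Type} [DecidableEq Attr]

/-- A tuple over the schema: a choice of a domain value for each attribute. -/
abbrev Tuple (S : Schema Attr) : Type := ∀ A, S.Dom A

/-- A relation: a finite multiset of tuples. -/
abbrev DBRel (S : Schema Attr) : Type := Multiset (Tuple S)

/-- `t` is non-null on every attribute of `X` (i.e. the projection of `t` on `X` is complete). -/
def completeOn (S : Schema Attr) (X : Finset Attr) (t : Tuple S) : Prop :=
  ∀ A ∈ X, t A ≠ S.null A

/-- `t` and `t'` agree on all attributes of `X` (i.e. `t(X) = t'(X)`). -/
def agreeOn (S : Schema Attr) (X : Finset Attr) (t t' : Tuple S) : Prop :=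
  ∀ A ∈ X, t A = t' A

/-- `r` satisfies the independence atom `X ⊥ Y`. -/
def satIA (S : Schema Attr) (r : DBRel S) (X Y : Finset Attr) : Prop :=
  (∀ t ∈ r, completeOn S (X ∪ Y) t) ∧
    ∀ t1 ∈ r, ∀ t2 ∈ r, ∃ t ∈ r, agreeOn S X t t1 ∧ agreeOn S Y t t2

/-- `t'` is a grounding of `t`: a complete tuple agreeing with `t` on its non-null entries. -/
def groundsTuple (S : Schema Attr) (t' t : Tuple S) : Prop :=
  (∀ A, t' A ≠ S.null A) ∧ ∀ A, t A ≠ S.null A → t' A = t A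

/-- `r'` is a grounding of `r`: each copy of each tuple is grounded independently. -/
def grounds (S : Schema Attr) (r' r : DBRel S) : Prop :=
  Multiset.Rel (groundsTuple S) r' r

/-- `r` satisfies the possible independence atom `X ⊥ₚ Y`. -/
def satPIA (S : Schema Attr) (r : DBRel S) (X Y : Finset Attr) : Prop :=
  ∃ r', grounds S r' r ∧ satIA S r' X Y

/-- `r` satisfies the certain independence atom `X ⊥_c Y`. -/
def satCIA (S : Schema Attr) (r : DBRel S) (X Y : Finset Attr) : Prop :=
  ∀ r', grounds S r' r → satIA S r' X Y

/-- `Γ ⊨ X ⊥_c Y`: logical implication for certain independence atoms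
(atoms coded as pairs `(X, Y)`). -/
def impliesCIA (S : Schema Attr) (Γ : Finset (Finset Attr × Finset Attr))
    (X Y : Finset Attr) : Prop :=
  ∀ r : DBRel S, (∀ p ∈ Γ, satCIA S r p.1 p.2) → satCIA S r X Y

/-- Deducibility of certain independence atoms from `Γ` via the rule set 𝔍_c:
trivial independence, symmetry, constancy, decomposition, and exchange (all for `⊥_c`). -/
inductive DerivCIA (Γ : Finset (Finset Attr × Finset Attr)) :
    Finset Attr → Finset Attr → Prop where
  | mem : ∀ X Y, (X, Y) ∈ Γ → DerivCIA Γ X Y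
  | triv : ∀ X, DerivCIA Γ X ∅
  | symm : ∀ X Y, DerivCIA Γ X Y → DerivCIA Γ Y X
  | const : ∀ X Y Z, DerivCIA Γ X X → DerivCIA Γ Y Z → DerivCIA Γ (X ∪ Y) Z
  | decomp : ∀ X Y Z, DerivCIA Γ X (Y ∪ Z) → DerivCIA Γ X Y
  | exch : ∀ X Y Z, DerivCIA Γ X Y → DerivCIA Γ (X ∪ Y) Z → DerivCIA Γ X (Y ∪ Z)


section CIAProof

open Finset

variable {Attr : Type} [DecidableEq Attr]

/-! ### Agreement lemmas -/

lemma agreeOn_refl {S : Schema Attr} (X : Finset Attr) (t : Tuple S) : agreeOn S X t t :=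
  fun _ _ => rfl

lemma agreeOn_mono' {S : Schema Attr} {X Y : Finset Attr} {t t' : Tuple S}
    (h : Y ⊆ X) (hX : agreeOn S X t t') : agreeOn S Y t t' := fun A hA => hX A (h hA)

lemma agreeOn_union' {S : Schema Attr} {X Y : Finset Attr} {t t' : Tuple S}
    (hX : agreeOn S X t t') (hY : agreeOn S Y t t') : agreeOn S (X ∪ Y) t t' := by
  intro A hA
  rcases Finset.mem_union.1 hA with h | h
  · exact hX A h
  · exact hY A h

/-- A relation all of whose tuples are complete. -/
def IsCompleteRel (S : Schema Attr) (r : DBRel S) : Prop :=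
  ∀ t ∈ r, ∀ A, t A ≠ S.null A

lemma completeOn_of_complete {S : Schema Attr} {r : DBRel S} (hc : IsCompleteRel S r)
    {t : Tuple S} (ht : t ∈ r) (X : Finset Attr) : completeOn S X t :=
  fun A _ => hc t ht A

/-! ### Closure of `satIA` under the rules, for complete relations -/

lemma satIA_triv {S : Schema Attr} {r : DBRel S} (hc : IsCompleteRel S r) (X : Finset Attr) :
    satIA S r X ∅ := by
  refine ⟨fun t ht => completeOn_of_complete hc ht _, fun t1 h1 t2 h2 => ⟨t1, h1, ?_, ?_⟩⟩
  · exact fun A _ => rfl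
  · intro A hA; exact absurd hA (Finset.notMem_empty A)

lemma satIA_symm {S : Schema Attr} {r : DBRel S} {X Y : Finset Attr}
    (h : satIA S r X Y) : satIA S r Y X := by
  obtain ⟨hcomp, hcl⟩ := h
  refine ⟨fun t ht A hA => hcomp t ht A (by rwa [Finset.union_comm]), fun t1 h1 t2 h2 => ?_⟩
  obtain ⟨t, ht, hX, hY⟩ := hcl t2 h2 t1 h1
  exact ⟨t, ht, hY, hX⟩

lemma satIA_const {S : Schema Attr} {r : DBRel S} {X Y Z : Finset Attr}
    (hc : IsCompleteRel S r) (hXX : satIA S r X X) (hYZ : satIA S r Y Z) :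
    satIA S r (X ∪ Y) Z := by
  refine ⟨fun t ht => completeOn_of_complete hc ht _, fun t1 h1 t2 h2 => ?_⟩
  obtain ⟨t, ht, hY, hZ⟩ := hYZ.2 t1 h1 t2 h2
  refine ⟨t, ht, agreeOn_union' ?_ hY, hZ⟩
  obtain ⟨s, _, hsa, hsb⟩ := hXX.2 t ht t1 h1
  intro A hA
  rw [← hsa A hA, hsb A hA]

lemma satIA_decomp {S : Schema Attr} {r : DBRel S} {X Y Z : Finset Attr}
    (hc : IsCompleteRel S r) (h : satIA S r X (Y ∪ Z)) : satIA S r X Y := by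
  refine ⟨fun t ht => completeOn_of_complete hc ht _, fun t1 h1 t2 h2 => ?_⟩
  obtain ⟨t, ht, hX, hYZ⟩ := h.2 t1 h1 t2 h2
  exact ⟨t, ht, hX, agreeOn_mono' Finset.subset_union_left hYZ⟩

lemma satIA_exch {S : Schema Attr} {r : DBRel S} {X Y Z : Finset Attr}
    (hc : IsCompleteRel S r) (h1 : satIA S r X Y) (h2 : satIA S r (X ∪ Y) Z) :
    satIA S r X (Y ∪ Z) := by
  refine ⟨fun t ht => completeOn_of_complete hc ht _, fun t1 ht1 t2 ht2 => ?_⟩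
  obtain ⟨s, hs, hsX, hsY⟩ := h1.2 t1 ht1 t2 ht2
  obtain ⟨t, ht, htXY, htZ⟩ := h2.2 s hs t2 ht2
  refine ⟨t, ht, ?_, agreeOn_union' ?_ htZ⟩
  · intro A hA; rw [htXY A (Finset.mem_union_left _ hA), hsX A hA]
  · intro A hA; rw [htXY A (Finset.mem_union_right _ hA), hsY A hA]

/-! ### Groundings -/

lemma grounds_complete {S : Schema Attr} {r' r : DBRel S} (h : grounds S r' r) :
    IsCompleteRel S r' := by
  induction h with
  | zero => intro t ht; simp at ht
  | @cons a b as bs hab _ ih =>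
    intro t ht A
    rcases Multiset.mem_cons.1 ht with rfl | ht
    · exact hab.1 A
    · exact ih t ht A

lemma grounds_self {S : Schema Attr} {r : DBRel S} (hc : IsCompleteRel S r) :
    grounds S r r := by
  induction r using Multiset.induction with
  | empty => exact Multiset.Rel.zero
  | cons t r ih =>
    refine Multiset.Rel.cons ⟨fun A => hc t (Multiset.mem_cons_self t r) A, fun A _ => rfl⟩
      (ih fun s hs A => hc s (Multiset.mem_cons_of_mem hs) A)

lemma grounds_eq_of_complete {S : Schema Attr} : ∀ {r' r : DBRel S},
    grounds S r' r → IsCompleteRel S r → r' = r := by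
  intro r' r h
  induction h with
  | zero => intro _; rfl
  | @cons a b as bs hab _ ih =>
    intro hc
    have ha : a = b := funext fun A => hab.2 A (hc b (Multiset.mem_cons_self b bs) A)
    rw [ha, ih fun t ht A => hc t (Multiset.mem_cons_of_mem ht) A]

lemma satCIA_of_complete {S : Schema Attr} {r : DBRel S} (hc : IsCompleteRel S r)
    {X Y : Finset Attr} (h : satIA S r X Y) : satCIA S r X Y := by
  intro r' hr'
  rw [grounds_eq_of_complete hr' hc]
  exact h

/-! ### Soundness -/

lemma derivCIA_sound {Γ : Finset (Finset Attr × Finset Attr)} {X Y : Finset Attr}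
    (h : DerivCIA Γ X Y) (S : Schema Attr) : impliesCIA S Γ X Y := by
  intro r hΓ r' hr'
  have hc := grounds_complete hr'
  have hbase : ∀ p ∈ Γ, satIA S r' p.1 p.2 := fun p hp => hΓ p hp r' hr'
  clear hΓ hr'
  induction h with
  | mem X Y hXY => exact hbase _ hXY
  | triv X => exact satIA_triv hc X
  | symm X Y _ ih => exact satIA_symm ih
  | const X Y Z _ _ ih1 ih2 => exact satIA_const hc ih1 ih2
  | decomp X Y Z _ ih => exact satIA_decomp hc ih
  | exch X Y Z _ _ ih1 ih2 => exact satIA_exch hc ih1 ih2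

end CIAProof

section CIAProof2

set_option linter.unusedSectionVars false
open Finset

variable {Attr : Type} [DecidableEq Attr]

/-! ### Structural lemmas about derivability -/

lemma DerivCIA.mono {Γ : Finset (Finset Attr × Finset Attr)} {X Y X' Y' : Finset Attr}
    (h : DerivCIA Γ X Y) (hX : X' ⊆ X) (hY : Y' ⊆ Y) : DerivCIA Γ X' Y' := by
  have e1 : Y = Y' ∪ Y := (Finset.union_eq_right.2 hY).symm
  have h1 : DerivCIA Γ X Y' := DerivCIA.decomp X Y' Y (e1 ▸ h)
  have e2 : X = X' ∪ X := (Finset.union_eq_right.2 hX).symm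
  exact DerivCIA.symm _ _ (DerivCIA.decomp Y' X' X (e2 ▸ DerivCIA.symm _ _ h1))

lemma deriv_empty_left {Γ : Finset (Finset Attr × Finset Attr)} (Y : Finset Attr) :
    DerivCIA Γ ∅ Y := DerivCIA.symm _ _ (DerivCIA.triv Y)

lemma deriv_const_self {Γ : Finset (Finset Attr × Finset Attr)} {C : Finset Attr}
    (hC : ∀ A ∈ C, DerivCIA Γ {A} {A}) : DerivCIA Γ C C := by
  induction C using Finset.induction_on with
  | empty => exact deriv_empty_left ∅
  | @insert A C hA ih =>
    have hCC := ih fun B hB => hC B (Finset.mem_insert_of_mem hB)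
    have hAA := hC A (Finset.mem_insert_self A C)
    have h1 : DerivCIA Γ ({A} ∪ C) C := DerivCIA.const _ _ _ hAA hCC
    have h2 : DerivCIA Γ (C ∪ {A}) {A} := DerivCIA.const _ _ _ hCC hAA
    have h2' : DerivCIA Γ (({A} ∪ C) ∪ C) {A} :=
      h2.mono (by intro x hx; simp only [Finset.mem_union] at hx ⊢; tauto) subset_rfl
    have h3 : DerivCIA Γ ({A} ∪ C) (C ∪ {A}) := DerivCIA.exch _ _ _ h1 h2'
    exact h3.mono (by intro x hx; simp only [Finset.mem_insert, Finset.mem_union,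
        Finset.mem_singleton] at hx ⊢; tauto)
      (by intro x hx; simp only [Finset.mem_insert, Finset.mem_union,
        Finset.mem_singleton] at hx ⊢; tauto)

lemma deriv_union4 {Γ : Finset (Finset Attr × Finset Attr)} {X1 Y1 X2 Y2 : Finset Attr}
    (h1 : DerivCIA Γ X1 Y1) (h2 : DerivCIA Γ X2 Y2)
    (h12 : DerivCIA Γ (X1 ∪ Y1) (X2 ∪ Y2)) :
    DerivCIA Γ (X1 ∪ X2) (Y1 ∪ Y2) := by
  have a1 : DerivCIA Γ Y1 X1 := DerivCIA.symm _ _ h1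
  have a2 : DerivCIA Γ (Y1 ∪ X1) X2 :=
    h12.mono (by intro x hx; simp only [Finset.mem_union] at hx ⊢; tauto)
      Finset.subset_union_left
  have a3 : DerivCIA Γ Y1 (X1 ∪ X2) := DerivCIA.exch _ _ _ a1 a2
  have b1 : DerivCIA Γ Y2 X2 := DerivCIA.symm _ _ h2
  have b2 : DerivCIA Γ (Y2 ∪ X2) (X1 ∪ Y1) :=
    (DerivCIA.symm _ _ h12).mono
      (by intro x hx; simp only [Finset.mem_union] at hx ⊢; tauto) subset_rfl
  have b3 : DerivCIA Γ Y2 (X2 ∪ (X1 ∪ Y1)) := DerivCIA.exch _ _ _ b1 b2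
  have c1 : DerivCIA Γ (X1 ∪ X2) Y1 := DerivCIA.symm _ _ a3
  have c2 : DerivCIA Γ ((X1 ∪ X2) ∪ Y1) Y2 :=
    (DerivCIA.symm _ _ b3).mono
      (by intro x hx; simp only [Finset.mem_union] at hx ⊢; tauto) subset_rfl
  exact DerivCIA.exch _ _ _ c1 c2

lemma deriv_of_sdiff {Γ : Finset (Finset Attr × Finset Attr)} {X Y C : Finset Attr}
    (hC : ∀ A ∈ C, DerivCIA Γ {A} {A})
    (h : DerivCIA Γ (X \ C) (Y \ C)) : DerivCIA Γ X Y := by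
  have hCC := deriv_const_self hC
  have h1 : DerivCIA Γ (C ∪ (X \ C)) (Y \ C) := DerivCIA.const _ _ _ hCC h
  have h2 : DerivCIA Γ (C ∪ (Y \ C)) (C ∪ (X \ C)) :=
    DerivCIA.const _ _ _ hCC (DerivCIA.symm _ _ h1)
  refine (DerivCIA.symm _ _ h2).mono ?_ ?_ <;>
    · intro x hx
      simp only [Finset.mem_union, Finset.mem_sdiff]
      by_cases hxC : x ∈ C <;> tauto

end CIAProof2

section CIAProof3

set_option linter.unusedSectionVars false
open Finset

variable {Attr : Type} [DecidableEq Attr]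

/-! ### Counterexample tuples -/

noncomputable def xv (S : Schema Attr) (A : Attr) : S.Dom A := (S.two_nonnull A).choose

noncomputable def yv (S : Schema Attr) (A : Attr) : S.Dom A :=
  (S.two_nonnull A).choose_spec.choose

lemma xv_ne_null (S : Schema Attr) (A : Attr) : xv S A ≠ S.null A :=
  (S.two_nonnull A).choose_spec.choose_spec.1

lemma yv_ne_null (S : Schema Attr) (A : Attr) : yv S A ≠ S.null A :=
  (S.two_nonnull A).choose_spec.choose_spec.2.1

lemma xv_ne_yv (S : Schema Attr) (A : Attr) : xv S A ≠ yv S A :=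
  (S.two_nonnull A).choose_spec.choose_spec.2.2

/-- The complete tuple coding the set `F`: value `yv` on `F`, `xv` elsewhere. -/
noncomputable def tup (S : Schema Attr) (F : Finset Attr) : Tuple S :=
  fun A => if A ∈ F then yv S A else xv S A

lemma tup_ne_null (S : Schema Attr) (F : Finset Attr) (A : Attr) : tup S F A ≠ S.null A := by
  unfold tup; split
  · exact yv_ne_null S A
  · exact xv_ne_null S A

lemma tup_eq_iff {S : Schema Attr} {F G : Finset Attr} (A : Attr) :
    tup S F A = tup S G A ↔ (A ∈ F ↔ A ∈ G) := by
  unfold tup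
  by_cases hF : A ∈ F <;> by_cases hG : A ∈ G <;> simp [hF, hG]
  · exact fun h => xv_ne_yv S A h.symm
  · exact xv_ne_yv S A

lemma agree_tup {S : Schema Attr} {F G U : Finset Attr} :
    agreeOn S U (tup S F) (tup S G) ↔ ∀ A ∈ U, (A ∈ F ↔ A ∈ G) := by
  unfold agreeOn
  refine forall_congr' fun A => forall_congr' fun _ => tup_eq_iff A

/-! ### Counterexample 1: the two-tuple relation varying only at `A₀` -/

noncomputable def rPair (S : Schema Attr) (A₀ : Attr) : DBRel S :=
  tup S ∅ ::ₘ {tup S {A₀}}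

lemma mem_rPair {S : Schema Attr} {A₀ : Attr} {t : Tuple S} :
    t ∈ rPair S A₀ ↔ t = tup S ∅ ∨ t = tup S {A₀} := by
  simp [rPair]

lemma rPair_complete (S : Schema Attr) (A₀ : Attr) : IsCompleteRel S (rPair S A₀) := by
  intro t ht A
  rcases mem_rPair.1 ht with rfl | rfl <;> exact tup_ne_null S _ A

lemma satIA_rPair {S : Schema Attr} {A₀ : Attr} {U V : Finset Attr}
    (h : A₀ ∉ U ∨ A₀ ∉ V) : satIA S (rPair S A₀) U V := by
  refine ⟨fun t ht => completeOn_of_complete (rPair_complete S A₀) ht _,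
    fun t1 h1 t2 h2 => ?_⟩
  have agree_off : ∀ s1 ∈ rPair S A₀, ∀ s2 ∈ rPair S A₀, ∀ W : Finset Attr,
      A₀ ∉ W → agreeOn S W s1 s2 := by
    intro s1 hs1 s2 hs2 W hW
    rcases mem_rPair.1 hs1 with rfl | rfl <;> rcases mem_rPair.1 hs2 with rfl | rfl <;>
      · rw [agree_tup]
        intro A hA
        have hAne : A ≠ A₀ := fun h => hW (h ▸ hA)
        simp [hAne]
  rcases h with hU | hV
  · exact ⟨t2, h2, agree_off t2 h2 t1 h1 U hU, agreeOn_refl V t2⟩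
  · exact ⟨t1, h1, agreeOn_refl U t1, agree_off t1 h1 t2 h2 V hV⟩

lemma not_satIA_rPair {S : Schema Attr} {A₀ : Attr} {U V : Finset Attr}
    (hU : A₀ ∈ U) (hV : A₀ ∈ V) : ¬ satIA S (rPair S A₀) U V := by
  rintro ⟨-, hcl⟩
  obtain ⟨t, -, ha, hb⟩ := hcl (tup S ∅) (by simp [rPair]) (tup S {A₀}) (by simp [rPair])
  have h12 : tup S ∅ A₀ = tup S {A₀} A₀ := (ha A₀ hU).symm.trans (hb A₀ hV)
  rw [tup_eq_iff] at h12
  simp at h12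

end CIAProof3

section CIAProof4

set_option linter.unusedSectionVars false
open Finset

variable {Attr : Type} [DecidableEq Attr]

/-! ### Counterexample 2: the parity relation on `E` -/

noncomputable def rPar (S : Schema Attr) (E : Finset Attr) : DBRel S :=
  Multiset.map (tup S) ((E.powerset.filter (fun F => Even F.card)).val)

lemma mem_rPar {S : Schema Attr} {E : Finset Attr} {t : Tuple S} :
    t ∈ rPar S E ↔ ∃ F, (F ⊆ E ∧ Even F.card) ∧ tup S F = t := by
  simp [rPar, Multiset.mem_map, Finset.mem_filter, Finset.mem_powerset]

lemma tup_mem_rPar {S : Schema Attr} {E F : Finset Attr} (hFE : F ⊆ E)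
    (hF : Even F.card) : tup S F ∈ rPar S E :=
  mem_rPar.2 ⟨F, ⟨hFE, hF⟩, rfl⟩

lemma rPar_complete (S : Schema Attr) (E : Finset Attr) : IsCompleteRel S (rPar S E) := by
  intro t ht A
  obtain ⟨F, -, rfl⟩ := mem_rPar.1 ht
  exact tup_ne_null S F A

lemma satIA_rPar {S : Schema Attr} {E U V : Finset Attr}
    (h1 : U ∩ V ∩ E = ∅)
    (h2 : U ∩ E = ∅ ∨ V ∩ E = ∅ ∨ ∃ A₀ ∈ E, A₀ ∉ U ∪ V) :
    satIA S (rPar S E) U V := by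
  refine ⟨fun t ht => completeOn_of_complete (rPar_complete S E) ht _,
    fun t1 ht1 t2 ht2 => ?_⟩
  obtain ⟨F, ⟨hFE, hFev⟩, rfl⟩ := mem_rPar.1 ht1
  obtain ⟨G, ⟨hGE, hGev⟩, rfl⟩ := mem_rPar.1 ht2
  rcases h2 with hU | hV | ⟨A₀, hA₀E, hA₀⟩
  · refine ⟨tup S G, ht2, ?_, agreeOn_refl V _⟩
    rw [agree_tup]
    intro A hA
    have hAE : A ∉ E := fun hAE =>
      (Finset.eq_empty_iff_forall_notMem.1 hU A) (Finset.mem_inter.2 ⟨hA, hAE⟩)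
    constructor
    · intro h; exact absurd (hGE h) hAE
    · intro h; exact absurd (hFE h) hAE
  · refine ⟨tup S F, ht1, agreeOn_refl U _, ?_⟩
    rw [agree_tup]
    intro A hA
    have hAE : A ∉ E := fun hAE =>
      (Finset.eq_empty_iff_forall_notMem.1 hV A) (Finset.mem_inter.2 ⟨hA, hAE⟩)
    constructor
    · intro h; exact absurd (hFE h) hAE
    · intro h; exact absurd (hGE h) hAE
  · -- use flexibility at A₀ to fix parity
    set H₀ : Finset Attr := (F ∩ U) ∪ (G ∩ V) with hH₀
    have hA₀H₀ : A₀ ∉ H₀ := by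
      simp only [hH₀, Finset.mem_union, Finset.mem_inter]
      rintro (⟨-, h⟩ | ⟨-, h⟩) <;>
        exact hA₀ (by simp [Finset.mem_union, h])
    set H : Finset Attr := if Even H₀.card then H₀ else insert A₀ H₀ with hH
    have hHE : H ⊆ E := by
      have h0 : H₀ ⊆ E := Finset.union_subset
        ((Finset.inter_subset_left).trans hFE) ((Finset.inter_subset_left).trans hGE)
      rw [hH]; split
      · exact h0
      · exact Finset.insert_subset hA₀E h0
    have hHev : Even H.card := by
      rw [hH]; split
      · assumption
      · rw [Finset.card_insert_of_notMem hA₀H₀]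
        exact Nat.even_add_one.2 (by assumption)
    have hmemH : ∀ A, A ≠ A₀ → (A ∈ H ↔ A ∈ H₀) := by
      intro A hA
      rw [hH]; split
      · exact Iff.rfl
      · simp [Finset.mem_insert, hA]
    refine ⟨tup S H, tup_mem_rPar hHE hHev, ?_, ?_⟩
    · rw [agree_tup]
      intro A hA
      have hAne : A ≠ A₀ := fun h => hA₀ (by simp [Finset.mem_union, h ▸ hA])
      rw [hmemH A hAne, hH₀]
      simp only [Finset.mem_union, Finset.mem_inter]
      constructor
      · rintro (⟨h, -⟩ | ⟨hG, hV⟩)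
        · exact h
        · exact absurd (Finset.mem_inter.2 ⟨Finset.mem_inter.2 ⟨hA, hV⟩, hGE hG⟩)
            (Finset.eq_empty_iff_forall_notMem.1 h1 A)
      · intro h; exact Or.inl ⟨h, hA⟩
    · rw [agree_tup]
      intro A hA
      have hAne : A ≠ A₀ := fun h => hA₀ (by simp [Finset.mem_union, h ▸ hA])
      rw [hmemH A hAne, hH₀]
      simp only [Finset.mem_union, Finset.mem_inter]
      constructor
      · rintro (⟨hF, hU⟩ | ⟨h, -⟩)
        · exact absurd (Finset.mem_inter.2 ⟨Finset.mem_inter.2 ⟨hU, hA⟩, hFE hF⟩)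
            (Finset.eq_empty_iff_forall_notMem.1 h1 A)
        · exact h
      · intro h; exact Or.inr ⟨h, hA⟩

lemma not_satIA_rPar {S : Schema Attr} {E X Y : Finset Attr} {a b : Attr}
    (hE : E ⊆ X ∪ Y) (ha : a ∈ E ∩ X) (hb : b ∈ E ∩ Y) (h1 : X ∩ Y ∩ E = ∅) :
    ¬ satIA S (rPar S E) X Y := by
  rintro ⟨-, hcl⟩
  obtain ⟨haE, haX⟩ := Finset.mem_inter.1 ha
  obtain ⟨hbE, hbY⟩ := Finset.mem_inter.1 hb
  have hab : a ≠ b := by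
    rintro rfl
    exact (Finset.eq_empty_iff_forall_notMem.1 h1 a)
      (Finset.mem_inter.2 ⟨Finset.mem_inter.2 ⟨haX, hbY⟩, haE⟩)
  have hmem2 : ({a, b} : Finset Attr) ⊆ E := by
    intro x hx; rcases Finset.mem_insert.1 hx with rfl | hx
    · exact haE
    · exact (Finset.mem_singleton.1 hx) ▸ hbE
  have hcard2 : Even ({a, b} : Finset Attr).card := by
    rw [Finset.card_insert_of_notMem (by simp [hab]), Finset.card_singleton]
    exact even_two
  obtain ⟨t, ht, hagX, hagY⟩ := hcl (tup S ∅) (tup_mem_rPar (Finset.empty_subset E) (by simp))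
    (tup S {a, b}) (tup_mem_rPar hmem2 hcard2)
  obtain ⟨H, ⟨hHE, hHev⟩, rfl⟩ := mem_rPar.1 ht
  have hXH : ∀ A ∈ X, A ∉ H := by
    intro A hA hAH
    exact absurd ((agree_tup.1 hagX A hA).1 hAH) (Finset.notMem_empty A)
  have hYH : ∀ A ∈ Y, (A ∈ H ↔ A ∈ ({a, b} : Finset Attr)) := fun A hA => agree_tup.1 hagY A hA
  have hHeq : H = {b} := by
    ext c
    simp only [Finset.mem_singleton]
    constructor
    · intro hc
      have hcE : c ∈ E := hHE hc
      have hcY : c ∈ Y := by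
        rcases Finset.mem_union.1 (hE hcE) with h | h
        · exact absurd hc (hXH c h)
        · exact h
      rcases Finset.mem_insert.1 ((hYH c hcY).1 hc) with rfl | h
      · exact absurd (Finset.mem_inter.2 ⟨Finset.mem_inter.2 ⟨haX, hcY⟩, hcE⟩)
          (Finset.eq_empty_iff_forall_notMem.1 h1 c)
      · exact Finset.mem_singleton.1 h
    · rintro rfl
      exact (hYH _ hbY).2 (by simp)
  rw [hHeq, Finset.card_singleton] at hHev
  exact (Nat.not_even_iff_odd.2 odd_one) hHev

end CIAProof4

section CIAProof5

set_option linter.unusedSectionVars false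
open Finset

variable {Attr : Type} [DecidableEq Attr]

lemma exists_minimal_nonderiv {Γ : Finset (Finset Attr × Finset Attr)} {X' Y' : Finset Attr} :
    ∀ n (E : Finset Attr), E.card ≤ n → ¬ DerivCIA Γ (E ∩ X') (E ∩ Y') →
    ∃ E₀, E₀ ⊆ E ∧ ¬ DerivCIA Γ (E₀ ∩ X') (E₀ ∩ Y') ∧
      ∀ F ⊂ E₀, DerivCIA Γ (F ∩ X') (F ∩ Y') := by
  intro n
  induction n with
  | zero =>
    intro E hE hnd
    rw [Nat.le_zero, Finset.card_eq_zero] at hE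
    subst hE
    exact absurd ((deriv_empty_left _).mono (by simp) subset_rfl) hnd
  | succ n ih =>
    intro E hE hnd
    by_cases hall : ∀ F ⊂ E, DerivCIA Γ (F ∩ X') (F ∩ Y')
    · exact ⟨E, subset_rfl, hnd, hall⟩
    · push_neg at hall
      obtain ⟨F, hFE, hFnd⟩ := hall
      obtain ⟨E₀, h0, h1, h2⟩ :=
        ih F (Nat.lt_succ_iff.1 (lt_of_lt_of_le (Finset.card_lt_card hFE) hE)) hFnd
      exact ⟨E₀, h0.trans hFE.subset, h1, h2⟩

end CIAProof5

/-- The rule set 𝔍_c is sound and complete for the implication problem for CIAs. -/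
theorem cia_axiomatisation_sound_complete [Fintype Attr] (S : Schema Attr)
    (Γ : Finset (Finset Attr × Finset Attr)) (X Y : Finset Attr) :
    impliesCIA S Γ X Y ↔ DerivCIA Γ X Y := by
  classical
  constructor
  · intro himp
    by_contra hnd
    by_cases hcaseA : ∃ A ∈ X ∩ Y, ¬ DerivCIA Γ {A} {A}
    · -- Case A: some attribute of X ∩ Y is not derivably constant
      obtain ⟨A₀, hA₀, hnAA⟩ := hcaseA
      obtain ⟨hA₀X, hA₀Y⟩ := Finset.mem_inter.1 hA₀
      have hcomp := rPair_complete S A₀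
      have hsat : ∀ p ∈ Γ, satCIA S (rPair S A₀) p.1 p.2 := by
        intro p hp
        refine satCIA_of_complete hcomp (satIA_rPair ?_)
        by_contra hc
        push_neg at hc
        exact hnAA ((DerivCIA.mem p.1 p.2 (by simpa using hp)).mono
          (Finset.singleton_subset_iff.2 hc.1) (Finset.singleton_subset_iff.2 hc.2))
      have hsatXY := himp (rPair S A₀) hsat (rPair S A₀) (grounds_self hcomp)
      exact not_satIA_rPair hA₀X hA₀Y hsatXY
    · -- Case B: all attributes of X ∩ Y are derivably constant
      push_neg at hcaseA
      set C : Finset Attr := Finset.univ.filter (fun A => DerivCIA Γ {A} {A}) with hCdef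
      have hCprop : ∀ A ∈ C, DerivCIA Γ {A} {A} := fun A hA => (Finset.mem_filter.1 hA).2
      have hXYC : X ∩ Y ⊆ C := fun A hA => Finset.mem_filter.2 ⟨Finset.mem_univ A,
        hcaseA A hA⟩
      set X' : Finset Attr := X \ C with hX'def
      set Y' : Finset Attr := Y \ C with hY'def
      have hnd' : ¬ DerivCIA Γ X' Y' := fun h => hnd (deriv_of_sdiff hCprop h)
      have hstart : ¬ DerivCIA Γ ((X' ∪ Y') ∩ X') ((X' ∪ Y') ∩ Y') := fun h =>
        hnd' (h.mono (Finset.subset_inter Finset.subset_union_left subset_rfl)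
          (Finset.subset_inter Finset.subset_union_right subset_rfl))
      obtain ⟨E, hEsub, hEnd, hEmin⟩ :=
        exists_minimal_nonderiv (X' ∪ Y').card (X' ∪ Y') le_rfl hstart
      have hEX' : (E ∩ X').Nonempty := by
        rw [Finset.nonempty_iff_ne_empty]
        intro h
        exact hEnd (by rw [h]; exact deriv_empty_left _)
      have hEY' : (E ∩ Y').Nonempty := by
        rw [Finset.nonempty_iff_ne_empty]
        intro h
        exact hEnd (by rw [h]; exact DerivCIA.triv _)
      have hsplit : ∀ E1 E2 : Finset Attr, E ⊆ E1 ∪ E2 →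
          E1 ⊂ E → E2 ⊂ E → ¬ DerivCIA Γ E1 E2 := by
        intro E1 E2 hEu h1lt h2lt hD
        have d1 : DerivCIA Γ (E1 ∩ X') (E1 ∩ Y') := hEmin E1 h1lt
        have d2 : DerivCIA Γ (E2 ∩ X') (E2 ∩ Y') := hEmin E2 h2lt
        have d12 : DerivCIA Γ ((E1 ∩ X') ∪ (E1 ∩ Y')) ((E2 ∩ X') ∪ (E2 ∩ Y')) :=
          hD.mono (Finset.union_subset Finset.inter_subset_left Finset.inter_subset_left)
            (Finset.union_subset Finset.inter_subset_left Finset.inter_subset_left)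
        have hbig := deriv_union4 d1 d2 d12
        apply hEnd
        refine hbig.mono ?_ ?_ <;>
        · intro x hx
          obtain ⟨hxE, hxW⟩ := Finset.mem_inter.1 hx
          rcases Finset.mem_union.1 (hEu hxE) with h | h
          · exact Finset.mem_union_left _ (Finset.mem_inter.2 ⟨h, hxW⟩)
          · exact Finset.mem_union_right _ (Finset.mem_inter.2 ⟨h, hxW⟩)
      have hEC : E ∩ C = ∅ := by
        rw [Finset.eq_empty_iff_forall_notMem]
        intro A hA
        obtain ⟨hAE, hAC⟩ := Finset.mem_inter.1 hA
        rcases Finset.mem_union.1 (hEsub hAE) with h | h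
        · exact (Finset.mem_sdiff.1 h).2 hAC
        · exact (Finset.mem_sdiff.1 h).2 hAC
      have hsatΓ : ∀ p ∈ Γ, satCIA S (rPar S E) p.1 p.2 := by
        intro p hp
        have hdisj : p.1 ∩ p.2 ∩ E = ∅ := by
          rw [Finset.eq_empty_iff_forall_notMem]
          intro A hA
          simp only [Finset.mem_inter] at hA
          obtain ⟨⟨hA1, hA2⟩, hAE⟩ := hA
          have hAA : DerivCIA Γ {A} {A} := (DerivCIA.mem p.1 p.2 (by simpa using hp)).mono
            (Finset.singleton_subset_iff.2 hA1) (Finset.singleton_subset_iff.2 hA2)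
          have hAC : A ∈ C := Finset.mem_filter.2 ⟨Finset.mem_univ A, hAA⟩
          exact Finset.eq_empty_iff_forall_notMem.1 hEC A (Finset.mem_inter.2 ⟨hAE, hAC⟩)
        refine satCIA_of_complete (rPar_complete S E) (satIA_rPar hdisj ?_)
        by_cases hex : ∃ A₀ ∈ E, A₀ ∉ p.1 ∪ p.2
        · exact Or.inr (Or.inr hex)
        push_neg at hex
        have hE12 : E ⊆ (E ∩ p.1) ∪ (E \ p.1) := by
          intro x hx
          by_cases hx1 : x ∈ p.1
          · exact Finset.mem_union_left _ (Finset.mem_inter.2 ⟨hx, hx1⟩)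
          · exact Finset.mem_union_right _ (Finset.mem_sdiff.2 ⟨hx, hx1⟩)
        have hder12 : DerivCIA Γ (E ∩ p.1) (E \ p.1) := by
          refine (DerivCIA.mem p.1 p.2 (by simpa using hp)).mono
            Finset.inter_subset_right ?_
          intro x hx
          obtain ⟨hxE, hx1⟩ := Finset.mem_sdiff.1 hx
          rcases Finset.mem_union.1 (hex x hxE) with h | h
          · exact absurd h hx1
          · exact h
        by_cases hE1 : E ∩ p.1 = E
        · -- E ⊆ p.1, hence p.2 ∩ E = ∅
          refine Or.inr (Or.inl ?_)
          rw [Finset.eq_empty_iff_forall_notMem]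
          intro x hx
          obtain ⟨hx2, hxE⟩ := Finset.mem_inter.1 hx
          have hx1 : x ∈ p.1 := (Finset.mem_inter.1 (show x ∈ E ∩ p.1 by rw [hE1]; exact hxE)).2
          exact Finset.eq_empty_iff_forall_notMem.1 hdisj x
            (Finset.mem_inter.2 ⟨Finset.mem_inter.2 ⟨hx1, hx2⟩, hxE⟩)
        by_cases hE2 : E \ p.1 = E
        · -- E disjoint from p.1
          refine Or.inl ?_
          rw [Finset.eq_empty_iff_forall_notMem]
          intro x hx
          obtain ⟨hx1, hxE⟩ := Finset.mem_inter.1 hx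
          exact (Finset.mem_sdiff.1 (show x ∈ E \ p.1 by rw [hE2]; exact hxE)).2 hx1
        · exact absurd hder12 (hsplit _ _ hE12
            (Finset.ssubset_iff_subset_ne.2 ⟨Finset.inter_subset_left, hE1⟩)
            (Finset.ssubset_iff_subset_ne.2 ⟨Finset.sdiff_subset, hE2⟩))
      have hsatXY := himp (rPar S E) hsatΓ (rPar S E) (grounds_self (rPar_complete S E))
      obtain ⟨a, haEX⟩ := hEX'
      obtain ⟨b, hbEY⟩ := hEY'
      have hEXY : E ⊆ X ∪ Y := by
        intro x hx
        rcases Finset.mem_union.1 (hEsub hx) with h | h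
        · exact Finset.mem_union_left _ (Finset.mem_sdiff.1 h).1
        · exact Finset.mem_union_right _ (Finset.mem_sdiff.1 h).1
      have haa : a ∈ E ∩ X := by
        obtain ⟨h1, h2⟩ := Finset.mem_inter.1 haEX
        exact Finset.mem_inter.2 ⟨h1, (Finset.mem_sdiff.1 h2).1⟩
      have hbb : b ∈ E ∩ Y := by
        obtain ⟨h1, h2⟩ := Finset.mem_inter.1 hbEY
        exact Finset.mem_inter.2 ⟨h1, (Finset.mem_sdiff.1 h2).1⟩
      have hxye : X ∩ Y ∩ E = ∅ := by
        rw [Finset.eq_empty_iff_forall_notMem]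
        intro A hA
        obtain ⟨hA1, hAE⟩ := Finset.mem_inter.1 hA
        exact Finset.eq_empty_iff_forall_notMem.1 hEC A
          (Finset.mem_inter.2 ⟨hAE, hXYC hA1⟩)
      exact not_satIA_rPar hEXY haa hbb hxye hsatXY
  · intro h
    exact derivCIA_sound h S
end

section
/- Let R = {A, B, C} be a relation schema with three distinct attributes and let Σ = {A⊥_p A, B⊥_p B, C⊥_p C, A⊥_c C, B⊥_c C}. Then Σ ⊨ AB⊥_c C, but there is no deduction of AB⊥_c C from Σ using the rules 𝔍_c ∪ 𝔍_p ∪ 𝔍_{p&c}. Consequently, 𝔍_c ∪ 𝔍_p ∪ 𝔍_{p&c} is not complete for the (CIA ∪ PIA, CIA)-implication problem. -/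
variable {Attr : Type} [DecidableEq Attr]

/-- A mixed atom: either a certain independence atom `X ⊥_c Y` or a possible
independence atom `X ⊥ₚ Y`. -/
inductive MAtom (Attr : Type) where
  | cia : Finset Attr → Finset Attr → MAtom Attr
  | pia : Finset Attr → Finset Attr → MAtom Attr
  deriving DecidableEq

/-- Satisfaction of a mixed atom. -/
def satM (S : Schema Attr) (r : DBRel S) : MAtom Attr → Prop
  | .cia X Y => satCIA S r X Y
  | .pia X Y => satPIA S r X Y

/-- `Γ ⊨ σ`: logical implication for mixed atoms. -/
def impliesM (S : Schema Attr) (Γ : Finset (MAtom Attr)) (σ : MAtom Attr) : Prop :=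
  ∀ r : DBRel S, (∀ τ ∈ Γ, satM S r τ) → satM S r σ

/-- An atom `X ⊥_c Y` or `X ⊥ₚ Y` is disjoint if `X ∩ Y = ∅`. -/
def MAtom.isDisjoint : MAtom Attr → Prop
  | .cia X Y => Disjoint X Y
  | .pia X Y => Disjoint X Y

/-- Deducibility of mixed atoms via the full rule set 𝔍_c ∪ 𝔍_p ∪ 𝔍_{p&c}:
all rules of 𝔍 for `⊥_c`, all rules of 𝔍 except exchange for `⊥ₚ`,
and the two mixed exchange rules. -/
inductive DerivMFull (Γ : Finset (MAtom Attr)) : MAtom Attr → Prop where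
  | mem : ∀ τ ∈ Γ, DerivMFull Γ τ
  | trivC : ∀ X, DerivMFull Γ (.cia X ∅)
  | symmC : ∀ X Y, DerivMFull Γ (.cia X Y) → DerivMFull Γ (.cia Y X)
  | constC : ∀ X Y Z, DerivMFull Γ (.cia X X) → DerivMFull Γ (.cia Y Z) →
      DerivMFull Γ (.cia (X ∪ Y) Z)
  | decompC : ∀ X Y Z, DerivMFull Γ (.cia X (Y ∪ Z)) → DerivMFull Γ (.cia X Y)
  | exchC : ∀ X Y Z, DerivMFull Γ (.cia X Y) → DerivMFull Γ (.cia (X ∪ Y) Z) →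
      DerivMFull Γ (.cia X (Y ∪ Z))
  | trivP : ∀ X, DerivMFull Γ (.pia X ∅)
  | symmP : ∀ X Y, DerivMFull Γ (.pia X Y) → DerivMFull Γ (.pia Y X)
  | constP : ∀ X Y Z, DerivMFull Γ (.pia X X) → DerivMFull Γ (.pia Y Z) →
      DerivMFull Γ (.pia (X ∪ Y) Z)
  | decompP : ∀ X Y Z, DerivMFull Γ (.pia X (Y ∪ Z)) → DerivMFull Γ (.pia X Y)
  | exchPC : ∀ X Y Z, DerivMFull Γ (.pia X Y) → DerivMFull Γ (.cia (X ∪ Y) Z) →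
      DerivMFull Γ (.pia X (Y ∪ Z))
  | exchCP : ∀ X Y Z, DerivMFull Γ (.cia X Y) → DerivMFull Γ (.pia (X ∪ Y) Z) →
      DerivMFull Γ (.pia X (Y ∪ Z))

/-- The set Σ = {A ⊥ₚ A, B ⊥ₚ B, C ⊥ₚ C, A ⊥_c C, B ⊥_c C} over R = {A, B, C},
with A = 0, B = 1, C = 2. -/
def exampleSigma : Finset (MAtom (Fin 3)) :=
  { MAtom.pia {0} {0}, MAtom.pia {1} {1}, MAtom.pia {2} {2},
    MAtom.cia {0} {2}, MAtom.cia {1} {2} }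

section AuxLemmas

lemma myRel_exists_right {α β : Type*} {p : α → β → Prop} {s : Multiset α} {t : Multiset β}
    (h : Multiset.Rel p s t) : ∀ b ∈ t, ∃ a ∈ s, p a b := by
  induction h with
  | zero => intro b hb; simp at hb
  | @cons a b as bs hab _ ih =>
      intro c hc
      rcases Multiset.mem_cons.1 hc with rfl | hc
      · exact ⟨a, Multiset.mem_cons_self _ _, hab⟩
      · obtain ⟨a', ha', hpa⟩ := ih c hc
        exact ⟨a', Multiset.mem_cons_of_mem ha', hpa⟩

lemma myRel_exists_left {α β : Type*} {p : α → β → Prop} {s : Multiset α} {t : Multiset β}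
    (h : Multiset.Rel p s t) : ∀ a ∈ s, ∃ b ∈ t, p a b := by
  induction h with
  | zero => intro a ha; simp at ha
  | @cons a b as bs hab _ ih =>
      intro c hc
      rcases Multiset.mem_cons.1 hc with rfl | hc
      · exact ⟨b, Multiset.mem_cons_self _ _, hab⟩
      · obtain ⟨b', hb', hpb⟩ := ih c hc
        exact ⟨b', Multiset.mem_cons_of_mem hb', hpb⟩

lemma myRel_self {α : Type*} {p : α → α → Prop} {s : Multiset α}
    (h : ∀ a ∈ s, p a a) : Multiset.Rel p s s := by
  induction s using Multiset.induction with
  | empty => exact Multiset.Rel.zero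
  | cons a s ih =>
      exact Multiset.Rel.cons (h a (Multiset.mem_cons_self a s))
        (ih fun b hb => h b (Multiset.mem_cons_of_mem hb))

variable {Attr : Type} [DecidableEq Attr]

/-- From `X ⊥ₚ X` for a single attribute `k`: all non-null `k`-values in `r` coincide. -/
lemma const_of_pia (S : Schema Attr) (r : DBRel S) (k : Attr)
    (h : satPIA S r {k} {k}) :
    ∀ t1 ∈ r, ∀ t2 ∈ r, t1 k ≠ S.null k → t2 k ≠ S.null k → t1 k = t2 k := by
  obtain ⟨r0, hg, _, hsat⟩ := h
  intro t1 h1 t2 h2 hn1 hn2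
  obtain ⟨u1, hu1, hg1⟩ := myRel_exists_right hg t1 h1
  obtain ⟨u2, hu2, hg2⟩ := myRel_exists_right hg t2 h2
  obtain ⟨t, -, ha1, ha2⟩ := hsat u1 hu1 u2 hu2
  have e1 : t k = u1 k := ha1 k (Finset.mem_singleton_self k)
  have e2 : t k = u2 k := ha2 k (Finset.mem_singleton_self k)
  rw [← hg1.2 k hn1, ← hg2.2 k hn2, ← e1, ← e2]

/-- Key lemma: under `X ⊥_c Y` for singletons `{i}`, `{j}` (plus the constancy of
non-null `i`- and `j`-values) a relation with at least two tuples cannot contain both a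
tuple that is null on `j` and a tuple that is null on `i`. -/
lemma no_cross_nulls (S : Schema Attr) (r : DBRel S) (i j : Attr) (hij : i ≠ j)
    (hcard : 2 ≤ Multiset.card r)
    (hci : ∀ t1 ∈ r, ∀ t2 ∈ r, t1 i ≠ S.null i → t2 i ≠ S.null i → t1 i = t2 i)
    (hcj : ∀ t1 ∈ r, ∀ t2 ∈ r, t1 j ≠ S.null j → t2 j ≠ S.null j → t1 j = t2 j)
    (hcia : satCIA S r {i} {j})
    {s : Tuple S} (hs : s ∈ r) (hsj : s j = S.null j)
    {u : Tuple S} (hu : u ∈ r) (hui : u i = S.null i) : False := by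
  classical
  choose x y hx hy hxy using S.two_nonnull
  have hPi : ∃ Pi : S.Dom i, Pi ≠ S.null i ∧ ∀ t ∈ r, t i ≠ S.null i → t i = Pi := by
    by_cases h : ∃ t ∈ r, t i ≠ S.null i
    · obtain ⟨w, hw, hwn⟩ := h
      exact ⟨w i, hwn, fun t ht htn => hci t ht w hw htn hwn⟩
    · push_neg at h
      exact ⟨x i, hx i, fun t ht htn => absurd (h t ht) htn⟩
  have hPj : ∃ Pj : S.Dom j, Pj ≠ S.null j ∧ ∀ t ∈ r, t j ≠ S.null j → t j = Pj := by
    by_cases h : ∃ t ∈ r, t j ≠ S.null j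
    · obtain ⟨w, hw, hwn⟩ := h
      exact ⟨w j, hwn, fun t ht htn => hcj t ht w hw htn hwn⟩
    · push_neg at h
      exact ⟨x j, hx j, fun t ht htn => absurd (h t ht) htn⟩
  obtain ⟨Pi, hPin, hPiv⟩ := hPi
  obtain ⟨Pj, hPjn, hPjv⟩ := hPj
  set Qi : S.Dom i := if Pi = x i then y i else x i with hQidef
  set Qj : S.Dom j := if Pj = x j then y j else x j with hQjdef
  have hQin : Qi ≠ S.null i := by
    rw [hQidef]; split
    · exact hy i
    · exact hx i
  have hQjn : Qj ≠ S.null j := by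
    rw [hQjdef]; split
    · exact hy j
    · exact hx j
  have hQiP : Qi ≠ Pi := by
    rw [hQidef]; split
    · next h => rw [h]; exact Ne.symm (hxy i)
    · next h => exact fun e => h e.symm
  have hQjP : Qj ≠ Pj := by
    rw [hQjdef]; split
    · next h => rw [h]; exact Ne.symm (hxy j)
    · next h => exact fun e => h e.symm
  set d : Tuple S := Function.update (Function.update x i Pi) j Pj with hd
  have hdi : d i = Pi := by
    rw [hd, Function.update_of_ne hij, Function.update_self]
  have hdj : d j = Pj := by
    rw [hd, Function.update_self]
  have hdk : ∀ k, k ≠ i → k ≠ j → d k = x k := by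
    intro k h1 h2
    rw [hd, Function.update_of_ne h2, Function.update_of_ne h1]
  have hdn : ∀ k, d k ≠ S.null k := by
    intro k
    by_cases h1 : k = j
    · subst h1; rw [hdj]; exact hPjn
    · by_cases h2 : k = i
      · subst h2; rw [hdi]; exact hPin
      · rw [hdk k h2 h1]; exact hx k
  set fill : Tuple S → Tuple S := fun t k => if t k = S.null k then d k else t k with hfill
  have hfill_g : ∀ t, groundsTuple S (fill t) t := by
    intro t
    constructor
    · intro k
      simp only [hfill]
      split
      · exact hdn k
      · next h => exact h
    · intro k hk
      simp only [hfill]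
      rw [if_neg hk]
  have hfill_i : ∀ t ∈ r, fill t i = Pi := by
    intro t ht
    simp only [hfill]
    split
    · exact hdi
    · next h => exact hPiv t ht h
  have hfill_j : ∀ t ∈ r, fill t j = Pj := by
    intro t ht
    simp only [hfill]
    split
    · exact hdj
    · next h => exact hPjv t ht h
  by_cases hv : ∃ v ∈ r, v i = S.null i ∧ v j = S.null j
  · -- a single tuple null on both i and j
    obtain ⟨v, hvr, hvi, hvj⟩ := hv
    set vg : Tuple S := Function.update (Function.update (fill v) i Qi) j Qj with hvg
    have hvgi : vg i = Qi := by
      rw [hvg, Function.update_of_ne hij, Function.update_self]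
    have hvgj : vg j = Qj := by rw [hvg, Function.update_self]
    have hvgk : ∀ k, k ≠ i → k ≠ j → vg k = fill v k := by
      intro k h1 h2
      rw [hvg, Function.update_of_ne h2, Function.update_of_ne h1]
    have hvgg : groundsTuple S vg v := by
      constructor
      · intro k
        by_cases h1 : k = j
        · subst h1; rw [hvgj]; exact hQjn
        · by_cases h2 : k = i
          · subst h2; rw [hvgi]; exact hQin
          · rw [hvgk k h2 h1]; exact (hfill_g v).1 k
      · intro k hk
        by_cases h1 : k = j
        · subst h1; exact absurd hvj hk
        · by_cases h2 : k = i
          · subst h2; exact absurd hvi hk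
          · rw [hvgk k h2 h1]; exact (hfill_g v).2 k hk
    have hrest : v ::ₘ r.erase v = r := Multiset.cons_erase hvr
    have hwex : ∃ w, w ∈ r.erase v := by
      apply Multiset.exists_mem_of_ne_zero
      intro h0
      rw [← hrest, h0] at hcard
      simp at hcard
    obtain ⟨w, hw⟩ := hwex
    have hgr : grounds S (vg ::ₘ (r.erase v).map fill) r := by
      have hgr0 : grounds S (vg ::ₘ (r.erase v).map fill) (v ::ₘ r.erase v) :=
        Multiset.Rel.cons hvgg
          (Multiset.rel_map_left.2 (myRel_self fun a _ => hfill_g a))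
      rwa [hrest] at hgr0
    obtain ⟨-, hsat⟩ := hcia _ hgr
    obtain ⟨t, ht, ha1, ha2⟩ := hsat vg (Multiset.mem_cons_self _ _) (fill w)
      (Multiset.mem_cons_of_mem (Multiset.mem_map_of_mem fill hw))
    have hti : t i = Qi := by rw [ha1 i (Finset.mem_singleton_self i), hvgi]
    have htj : t j = Pj := by
      rw [ha2 j (Finset.mem_singleton_self j), hfill_j w (Multiset.mem_of_mem_erase hw)]
    rcases Multiset.mem_cons.1 ht with rfl | htm
    · exact hQjP (by rw [← hvgj]; exact htj)
    · obtain ⟨t', ht', rfl⟩ := Multiset.mem_map.1 htm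
      exact hQiP (by rw [← hti]; exact hfill_i t' (Multiset.mem_of_mem_erase ht'))
  · -- two distinct tuples, one null on j, one null on i
    push_neg at hv
    have hsi : s i ≠ S.null i := fun h => hv s hs h hsj
    have huj : u j ≠ S.null j := hv u hu hui
    have hsu : s ≠ u := fun e => hsi (by rw [e]; exact hui)
    have hu' : u ∈ r.erase s := (Multiset.mem_erase_of_ne (Ne.symm hsu)).2 hu
    set sg : Tuple S := Function.update (fill s) j Qj with hsgdef
    set ug : Tuple S := Function.update (fill u) i Qi with hugdef
    have hsgj : sg j = Qj := by rw [hsgdef, Function.update_self]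
    have hsgk : ∀ k, k ≠ j → sg k = fill s k := by
      intro k h1; rw [hsgdef, Function.update_of_ne h1]
    have hugi : ug i = Qi := by rw [hugdef, Function.update_self]
    have hugk : ∀ k, k ≠ i → ug k = fill u k := by
      intro k h1; rw [hugdef, Function.update_of_ne h1]
    have hsgg : groundsTuple S sg s := by
      constructor
      · intro k
        by_cases h1 : k = j
        · subst h1; rw [hsgj]; exact hQjn
        · rw [hsgk k h1]; exact (hfill_g s).1 k
      · intro k hk
        by_cases h1 : k = j
        · subst h1; exact absurd hsj hk
        · rw [hsgk k h1]; exact (hfill_g s).2 k hk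
    have hugg : groundsTuple S ug u := by
      constructor
      · intro k
        by_cases h1 : k = i
        · subst h1; rw [hugi]; exact hQin
        · rw [hugk k h1]; exact (hfill_g u).1 k
      · intro k hk
        by_cases h1 : k = i
        · subst h1; exact absurd hui hk
        · rw [hugk k h1]; exact (hfill_g u).2 k hk
    have hrdec : r = s ::ₘ u ::ₘ (r.erase s).erase u := by
      rw [Multiset.cons_erase hu', Multiset.cons_erase hs]
    have hgr : grounds S (sg ::ₘ ug ::ₘ ((r.erase s).erase u).map fill) r := by
      have hgr0 : grounds S (sg ::ₘ ug ::ₘ ((r.erase s).erase u).map fill)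
          (s ::ₘ u ::ₘ (r.erase s).erase u) :=
        Multiset.Rel.cons hsgg (Multiset.Rel.cons hugg
          (Multiset.rel_map_left.2 (myRel_self fun a _ => hfill_g a)))
      rwa [← hrdec] at hgr0
    obtain ⟨-, hsat⟩ := hcia _ hgr
    obtain ⟨t, ht, ha1, ha2⟩ := hsat ug
      (Multiset.mem_cons_of_mem (Multiset.mem_cons_self _ _)) sg
      (Multiset.mem_cons_self _ _)
    have hti : t i = Qi := by rw [ha1 i (Finset.mem_singleton_self i), hugi]
    have htj : t j = Qj := by rw [ha2 j (Finset.mem_singleton_self j), hsgj]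
    rcases Multiset.mem_cons.1 ht with rfl | htm
    · -- t = sg
      refine hQiP ?_
      rw [← hti, hsgk i hij]
      exact hfill_i s hs
    · rcases Multiset.mem_cons.1 htm with rfl | htm'
      · -- t = ug
        refine hQjP ?_
        rw [← htj, hugk j (Ne.symm hij)]
        exact hfill_j u hu
      · obtain ⟨t', ht', rfl⟩ := Multiset.mem_map.1 htm'
        refine hQiP ?_
        rw [← hti]
        exact hfill_i t' (Multiset.mem_of_mem_erase (Multiset.mem_of_mem_erase ht'))

end AuxLemmas

/-- Σ logically implies AB ⊥_c C over any schema on three attributes. -/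
lemma sigma_implies (S : Schema (Fin 3)) :
    impliesM S exampleSigma (.cia {0, 1} {2}) := by
  classical
  intro r hsig
  have hpA : satPIA S r {0} {0} := hsig (.pia {0} {0}) (by decide)
  have hpB : satPIA S r {1} {1} := hsig (.pia {1} {1}) (by decide)
  have hpC : satPIA S r {2} {2} := hsig (.pia {2} {2}) (by decide)
  have hcA : satCIA S r {0} {2} := hsig (.cia {0} {2}) (by decide)
  have hcB : satCIA S r {1} {2} := hsig (.cia {1} {2}) (by decide)
  have cstA := const_of_pia S r 0 hpA
  have cstB := const_of_pia S r 1 hpB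
  have cstC := const_of_pia S r 2 hpC
  show satCIA S r {0, 1} {2}
  intro r' hg
  constructor
  · intro t ht A _
    obtain ⟨b, _, hgt⟩ := myRel_exists_left hg t ht
    exact hgt.1 A
  · intro t1 ht1 t2 ht2
    obtain ⟨b1, hb1, hg1⟩ := myRel_exists_left hg t1 ht1
    obtain ⟨b2, hb2, hg2⟩ := myRel_exists_left hg t2 ht2
    by_cases hc2 : ∀ v ∈ r, v 2 ≠ S.null 2
    · -- attribute C is constant in every grounding
      refine ⟨t1, ht1, fun A _ => rfl, fun A hA => ?_⟩
      rw [Finset.mem_singleton] at hA; subst hA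
      rw [hg1.2 2 (hc2 b1 hb1), hg2.2 2 (hc2 b2 hb2)]
      exact cstC b1 hb1 b2 hb2 (hc2 b1 hb1) (hc2 b2 hb2)
    · push_neg at hc2
      obtain ⟨s, hs, hs2⟩ := hc2
      by_cases hcard : 2 ≤ Multiset.card r
      · have h0 : ∀ u ∈ r, u 0 ≠ S.null 0 := fun u hu h =>
          (no_cross_nulls S r 0 2 (by decide) hcard cstA cstC hcA hs hs2 hu h).elim
        have h1 : ∀ u ∈ r, u 1 ≠ S.null 1 := fun u hu h =>
          (no_cross_nulls S r 1 2 (by decide) hcard cstB cstC hcB hs hs2 hu h).elim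
        refine ⟨t2, ht2, fun A hA => ?_, fun A _ => rfl⟩
        rcases Finset.mem_insert.1 hA with rfl | hA
        · rw [hg2.2 0 (h0 b2 hb2), hg1.2 0 (h0 b1 hb1)]
          exact cstA b2 hb2 b1 hb1 (h0 b2 hb2) (h0 b1 hb1)
        · rw [Finset.mem_singleton] at hA; subst hA
          rw [hg2.2 1 (h1 b2 hb2), hg1.2 1 (h1 b1 hb1)]
          exact cstB b2 hb2 b1 hb1 (h1 b2 hb2) (h1 b1 hb1)
      · -- r has at most one tuple
        have hcr' : Multiset.card r' ≤ 1 := by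
          rw [Multiset.card_eq_card_of_rel hg]; omega
        have h12 : t2 = t1 := by
          have he := Multiset.cons_erase ht1
          have hz : Multiset.card (r'.erase t1) = 0 := by
            have hc := Multiset.card_cons t1 (r'.erase t1)
            rw [he] at hc
            omega
          rw [Multiset.card_eq_zero] at hz
          rw [← he, hz] at ht2
          simpa using ht2
        exact ⟨t1, ht1, fun A _ => rfl, fun A _ => by rw [h12]⟩

/-- The invariant on certain atoms preserved by all rules when starting from Σ. -/
def goodC (X Y : Finset (Fin 3)) : Prop :=
  X = ∅ ∨ Y = ∅ ∨ (X = {0} ∧ Y = {2}) ∨ (X = {2} ∧ Y = {0}) ∨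
    (X = {1} ∧ Y = {2}) ∨ (X = {2} ∧ Y = {1})

instance (X Y : Finset (Fin 3)) : Decidable (goodC X Y) := by
  unfold goodC; infer_instance

/-- The invariant on mixed atoms. -/
def goodM : MAtom (Fin 3) → Prop
  | .cia X Y => goodC X Y
  | .pia _ _ => True

/-- Every atom derivable from Σ satisfies the invariant. -/
lemma deriv_good {σ : MAtom (Fin 3)} (h : DerivMFull exampleSigma σ) : goodM σ := by
  induction h with
  | mem τ hτ =>
      simp only [exampleSigma, Finset.mem_insert, Finset.mem_singleton] at hτ
      rcases hτ with rfl | rfl | rfl | rfl | rfl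
      · trivial
      · trivial
      · trivial
      · exact (by decide : goodC {0} {2})
      · exact (by decide : goodC {1} {2})
  | trivC X => exact Or.inr (Or.inl rfl)
  | symmC X Y _ ih =>
      exact (by decide : ∀ X Y : Finset (Fin 3), goodC X Y → goodC Y X) X Y ih
  | constC X Y Z _ _ ih1 ih2 =>
      exact (by decide : ∀ X Y Z : Finset (Fin 3),
        goodC X X → goodC Y Z → goodC (X ∪ Y) Z) X Y Z ih1 ih2
  | decompC X Y Z _ ih =>
      exact (by decide : ∀ X Y Z : Finset (Fin 3),
        goodC X (Y ∪ Z) → goodC X Y) X Y Z ih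
  | exchC X Y Z _ _ ih1 ih2 =>
      exact (by decide : ∀ X Y Z : Finset (Fin 3),
        goodC X Y → goodC (X ∪ Y) Z → goodC X (Y ∪ Z)) X Y Z ih1 ih2
  | trivP X => trivial
  | symmP X Y _ _ => trivial
  | constP X Y Z _ _ _ _ => trivial
  | decompP X Y Z _ _ => trivial
  | exchPC X Y Z _ _ _ _ => trivial
  | exchCP X Y Z _ _ _ _ => trivial

/-- AB ⊥_c C is not derivable from Σ. -/
lemma not_deriv : ¬ DerivMFull exampleSigma (.cia {0, 1} {2}) := by
  intro h
  have hng : ¬ goodC ({0, 1} : Finset (Fin 3)) {2} := by decide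
  exact hng (deriv_good h)

/-- A concrete schema on three attributes. -/
def trivialSchema : Schema (Fin 3) :=
  { Dom := fun _ => Fin 3
    null := fun _ => 0
    two_nonnull := fun _ =>
      ⟨1, 2, by show (1 : Fin 3) ≠ 0; decide, by show (2 : Fin 3) ≠ 0; decide,
        by show (1 : Fin 3) ≠ 2; decide⟩ }

/-- Σ logically implies AB ⊥_c C (over any schema on {A, B, C}), yet AB ⊥_c C has no
deduction from Σ via 𝔍_c ∪ 𝔍_p ∪ 𝔍_{p&c}; consequently this rule set is not complete
for the (CIA ∪ PIA, CIA)-implication problem. -/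
theorem mixed_rules_not_complete :
    (∀ S : Schema (Fin 3), impliesM S exampleSigma (.cia {0, 1} {2})) ∧
    ¬ DerivMFull exampleSigma (.cia {0, 1} {2}) ∧
    ¬ (∀ (S : Schema (Fin 3)) (Γ : Finset (MAtom (Fin 3))) (X Y : Finset (Fin 3)),
        impliesM S Γ (.cia X Y) → DerivMFull Γ (.cia X Y)) := by
  refine ⟨sigma_implies, not_deriv, fun h => ?_⟩
  exact not_deriv (h trivialSchema exampleSigma {0, 1} {2} (sigma_implies trivialSchema))
end

section
/- Let R = {A, B, C} be a relation schema with three distinct attributes, each with domain {0, 1, *}, and let r be the relation over R consisting of the tuples (A, B, C) = (0, 0, 0), (*, 1, 0), (*, 0, 1), (1, 1, 1), each with multiplicity 1. Then r satisfies A⊥_p B and AB⊥_p C, but r does not satisfy A⊥_p BC. In particular, the exchange rule (from X⊥_p Y and XY⊥_p Z infer X⊥_p YZ) is not sound for possible independence atoms. -/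
variable {Attr : Type} [DecidableEq Attr]

/-- The schema R = {A, B, C} (A = 0, B = 1, C = 2), each attribute with domain
{0, 1, *} coded as `Option Bool` with `none` the null symbol. -/
def S3 : Schema (Fin 3) where
  Dom := fun _ => Option Bool
  null := fun _ => none
  two_nonnull := fun _ => ⟨some false, some true, by simp, by simp, by simp⟩

/-- The relation r with tuples (0,0,0), (*,1,0), (*,0,1), (1,1,1), each of multiplicity 1. -/
def rEx : DBRel S3 :=
  { ![some false, some false, some false],
    ![none, some true, some false],
    ![none, some false, some true],
    ![some true, some true, some true] }

/-! A grounding of `r` must contain groundings of the complete tuples `(0,0,0)` and `(1,1,1)`, so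
`A ⊥ BC` would force a grounding of some tuple of `r` to read `(0,1,1)`; but every tuple of `r`
clashes with `(0,1,1)` in a non-null entry. The two positive atoms are witnessed by filling the
missing `A`-values with the `C`-values, respectively with the `B`-values. -/

section

-- Re-bound so that the `[DecidableEq Attr]` declared with the definitions is not included below.
variable {Attr : Type} {S : Schema Attr}

def compatibleOn (S : Schema Attr) (X : Finset Attr) (t u : Tuple S) : Prop :=
  ∀ A ∈ X, t A ≠ S.null A → t A = u A

section Decidable

variable [∀ A, DecidableEq (S.Dom A)]

instance (X : Finset Attr) (t : Tuple S) : Decidable (completeOn S X t) := by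
  unfold completeOn; infer_instance

instance (X : Finset Attr) (t u : Tuple S) : Decidable (agreeOn S X t u) := by
  unfold agreeOn; infer_instance

instance (X : Finset Attr) (t u : Tuple S) : Decidable (compatibleOn S X t u) := by
  unfold compatibleOn; infer_instance

instance [Fintype Attr] (t' t : Tuple S) : Decidable (groundsTuple S t' t) := by
  unfold groundsTuple; infer_instance

instance [DecidableEq Attr] (r : DBRel S) (X Y : Finset Attr) : Decidable (satIA S r X Y) := by
  have := @Multiset.decidableExistsMultiset
  unfold satIA; infer_instance

end Decidable

lemma agreeOn.trans {X : Finset Attr} {t u v : Tuple S} (htu : agreeOn S X t u)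
    (huv : agreeOn S X u v) : agreeOn S X t v :=
  fun A hA => (htu A hA).trans (huv A hA)

lemma groundsTuple.agreeOn_of_completeOn {X : Finset Attr} {t' t : Tuple S}
    (h : groundsTuple S t' t) (ht : completeOn S X t) : agreeOn S X t' t :=
  fun A hA => h.2 A (ht A hA)

lemma groundsTuple.compatibleOn_of_agreeOn {X : Finset Attr} {t' t u : Tuple S}
    (h : groundsTuple S t' t) (hu : agreeOn S X t' u) : compatibleOn S X t u :=
  fun A hA htA => (h.2 A htA).symm.trans (hu A hA)

lemma grounds.exists_mem_groundsTuple {r' r : DBRel S} (h : grounds S r' r) {t : Tuple S}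
    (ht : t ∈ r) : ∃ t' ∈ r', groundsTuple S t' t :=
  Multiset.exists_mem_of_rel_of_mem (Multiset.rel_flip.2 h) ht

lemma grounds_map {r : DBRel S} {g : Tuple S → Tuple S}
    (hg : ∀ t ∈ r, groundsTuple S (g t) t) : grounds S (r.map g) r :=
  Multiset.rel_map_left.2 (Multiset.rel_refl_of_refl_on hg)

theorem not_satPIA_of_forall_not_compatibleOn [DecidableEq Attr] {r : DBRel S}
    {X Y : Finset Attr} {t₁ t₂ : Tuple S} (ht₁ : t₁ ∈ r) (ht₂ : t₂ ∈ r)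
    (hX : completeOn S X t₁) (hY : completeOn S Y t₂)
    (h : ∀ t ∈ r, ¬ (compatibleOn S X t t₁ ∧ compatibleOn S Y t t₂)) :
    ¬ satPIA S r X Y := by
  rintro ⟨r', hr', -, hind⟩
  obtain ⟨g₁, hg₁, hg₁t₁⟩ := hr'.exists_mem_groundsTuple ht₁
  obtain ⟨g₂, hg₂, hg₂t₂⟩ := hr'.exists_mem_groundsTuple ht₂
  obtain ⟨t', ht', hXt', hYt'⟩ := hind g₁ hg₁ g₂ hg₂
  obtain ⟨t, ht, ht't⟩ := Multiset.exists_mem_of_rel_of_mem hr' ht'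
  exact h t ht ⟨ht't.compatibleOn_of_agreeOn (hXt'.trans (hg₁t₁.agreeOn_of_completeOn hX)),
    ht't.compatibleOn_of_agreeOn (hYt'.trans (hg₂t₂.agreeOn_of_completeOn hY))⟩

end

instance (A : Fin 3) : DecidableEq (S3.Dom A) := inferInstanceAs (DecidableEq (Option Bool))

def fillAFrom (j : Fin 3) (t : Tuple S3) : Tuple S3 :=
  Function.update t 0 ((t 0).or (t j))

/-- r satisfies A ⊥ₚ B and AB ⊥ₚ C but not A ⊥ₚ BC; in particular, the exchange rule
is not sound for possible independence atoms. -/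
theorem exchange_not_sound_for_pia :
    satPIA S3 rEx {0} {1} ∧ satPIA S3 rEx ({0} ∪ {1}) {2} ∧ ¬ satPIA S3 rEx {0} ({1} ∪ {2}) ∧
    ¬ (∀ (r : DBRel S3) (X Y Z : Finset (Fin 3)),
        satPIA S3 r X Y → satPIA S3 r (X ∪ Y) Z → satPIA S3 r X (Y ∪ Z)) := by
  have hA_B : satPIA S3 rEx {0} {1} :=
    ⟨rEx.map (fillAFrom 2), grounds_map (by decide), by decide⟩
  have hAB_C : satPIA S3 rEx ({0} ∪ {1}) {2} :=
    ⟨rEx.map (fillAFrom 1), grounds_map (by decide), by decide⟩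
  -- `show` types the constant tuples as `Tuple S3`, whose entries live in `S3.Dom A` (where the
  -- `DecidableEq` instance is), rather than in `Option Bool`.
  have hA_BC : ¬ satPIA S3 rEx {0} ({1} ∪ {2}) :=
    not_satPIA_of_forall_not_compatibleOn (t₁ := show Tuple S3 from fun _ => some false)
      (t₂ := show Tuple S3 from fun _ => some true) (by decide) (by decide) (by decide)
      (by decide) (by decide)
  exact ⟨hA_B, hAB_C, hA_BC, fun exchange => hA_BC (exchange rEx {0} {1} {2} hA_B hAB_C)⟩
end

section
/- Let A, B ∈ R be distinct attributes and let r be a relation over R with multiplicity function m. Let N_A (resp. N_B) be the set of non-null values occurring in column A (resp. column B) of r. Then r satisfies A⊥_p B if and only if there exists a function g assigning to each pair (a, b) ∈ N_A × N_B a tuple g(a, b) occurring in r such that g(a, b)(A) ∈ {a, *} and g(a, b)(B) ∈ {b, *}, and for every tuple t occurring in r, the number of pairs (a, b) ∈ N_A × N_B with g(a, b) = t is at most m(t). -/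
variable {Attr : Type} [DecidableEq Attr]

/-- The set of non-null values occurring in column `A` of `r`. -/
def colVals [Fintype Attr] (S : Schema Attr) [∀ A, DecidableEq (S.Dom A)]
    (r : DBRel S) (A : Attr) : Finset (S.Dom A) :=
  (r.toFinset.image fun t => t A).erase (S.null A)

namespace PIAaux

/-- A sub-multiset on the left of a `Rel` has a related sub-multiset on the right. -/
theorem rel_exists_le {α β : Type*} [DecidableEq α] {R : α → β → Prop} {s : Multiset α}
    {t : Multiset β} (h : Multiset.Rel R s t) :
    ∀ s' ≤ s, ∃ t' ≤ t, Multiset.Rel R s' t' := by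
  induction h with
  | zero =>
    intro s' hs'
    rw [Multiset.le_zero] at hs'
    exact ⟨0, le_refl _, hs' ▸ Multiset.Rel.zero⟩
  | @cons a b as bs hab hrel ih =>
    intro s' hs'
    by_cases ha : a ∈ s'
    · have h1 : s'.erase a ≤ as := by
        have h2 := Multiset.erase_le_erase a hs'
        rwa [Multiset.erase_cons_head] at h2
      obtain ⟨t', ht', hr⟩ := ih _ h1
      refine ⟨b ::ₘ t', Multiset.cons_le_cons _ ht', ?_⟩
      rw [← Multiset.cons_erase ha]
      exact Multiset.Rel.cons hab hr
    · have h1 : s' ≤ as := by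
        rw [Multiset.le_iff_count] at hs' ⊢
        intro x
        rcases eq_or_ne x a with rfl | hx
        · simp [Multiset.count_eq_zero_of_notMem ha]
        · have h2 := hs' x
          rwa [Multiset.count_cons_of_ne hx] at h2
      obtain ⟨t', ht', hr⟩ := ih _ h1
      exact ⟨t', le_trans ht' (Multiset.le_cons_self _ _), hr⟩

/-- Extract a function from a `Rel` whose left side is a map over a nodup multiset. -/
theorem rel_map_exists_fun {α β γ : Type*} [DecidableEq γ] {R : α → β → Prop} {w : γ → α}
    (f0 : γ → β) :
    ∀ (s : Multiset γ), s.Nodup → ∀ {t : Multiset β}, Multiset.Rel R (s.map w) t →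
      ∃ f : γ → β, t = s.map f ∧ ∀ p ∈ s, R (w p) (f p) := by
  intro s
  induction s using Multiset.induction with
  | empty =>
    intro _ t h
    rw [Multiset.map_zero, Multiset.rel_zero_left] at h
    exact ⟨f0, by simp [h], by simp⟩
  | cons a s ih =>
    intro hnd t h
    rw [Multiset.map_cons, Multiset.rel_cons_left] at h
    obtain ⟨b, t', hab, hrel, rfl⟩ := h
    obtain ⟨hna, hnds⟩ := Multiset.nodup_cons.mp hnd
    obtain ⟨f, rfl, hf⟩ := ih hnds hrel
    refine ⟨Function.update f a b, ?_, ?_⟩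
    · rw [Multiset.map_cons, Function.update_self]
      congr 1
      refine Multiset.map_congr rfl fun x hx => ?_
      exact (Function.update_of_ne (fun hxa => hna (by rw [← hxa]; exact hx)) _ _).symm
    · intro p hp
      rcases Multiset.mem_cons.mp hp with rfl | hp
      · rwa [Function.update_self]
      · rw [Function.update_of_ne (fun h => hna (by rw [← h]; exact hp))]
        exact hf p hp

end PIAaux

/-- For distinct attributes `A, B`: `r ⊨ A ⊥ₚ B` iff there is an assignment `g` of pairs
`(a, b)` of non-null column values to tuples of `r` such that `g a b` is `a` or null on `A`
and `b` or null on `B`, and each tuple `t` of `r` is used at most `m(t)` many times. -/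
theorem unary_pia_matching_characterisation [Fintype Attr] (S : Schema Attr)
    [∀ A, DecidableEq (S.Dom A)] (A B : Attr) (hAB : A ≠ B) (r : DBRel S) :
    satPIA S r {A} {B} ↔
      ∃ g : S.Dom A → S.Dom B → Tuple S,
        (∀ a ∈ colVals S r A, ∀ b ∈ colVals S r B,
          g a b ∈ r ∧ (g a b A = a ∨ g a b A = S.null A) ∧
            (g a b B = b ∨ g a b B = S.null B)) ∧
        ∀ t ∈ r,
          (((colVals S r A) ×ˢ (colVals S r B)).filter fun p => g p.1 p.2 = t).card ≤
            r.count t := by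
  classical
  have mem_colVals : ∀ (C : Attr) (x : S.Dom C),
      x ∈ colVals S r C ↔ x ≠ S.null C ∧ ∃ t ∈ r, t C = x := by
    intro C x
    simp [colVals, Finset.mem_erase, Finset.mem_image, Multiset.mem_toFinset]
  constructor
  · rintro ⟨r', hgr, hcomp, hprod⟩
    -- every pair of column values is realised in r'
    have hwit : ∀ p : S.Dom A × S.Dom B, p ∈ colVals S r A ×ˢ colVals S r B →
        ∃ t' ∈ r', t' A = p.1 ∧ t' B = p.2 := by
      rintro ⟨a, b⟩ hp
      rw [Finset.mem_product] at hp
      obtain ⟨ha, hb⟩ := hp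
      obtain ⟨hane, ta, hta, htaA⟩ := (mem_colVals A a).mp ha
      obtain ⟨hbne, tb, htb, htbB⟩ := (mem_colVals B b).mp hb
      have hflip : Multiset.Rel (flip (groundsTuple S)) r r' := Multiset.rel_flip.mpr hgr
      obtain ⟨ta', hta', hgta⟩ := Multiset.exists_mem_of_rel_of_mem hflip hta
      obtain ⟨tb', htb', hgtb⟩ := Multiset.exists_mem_of_rel_of_mem hflip htb
      have htaA' : ta' A = a := by
        rw [hgta.2 A (htaA ▸ hane)]; exact htaA
      have htbB' : tb' B = b := by
        rw [hgtb.2 B (htbB ▸ hbne)]; exact htbB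
      obtain ⟨u, hu, huA, huB⟩ := hprod ta' hta' tb' htb'
      exact ⟨u, hu, by
        rw [huA A (Finset.mem_singleton_self A)]; exact htaA', by
        rw [huB B (Finset.mem_singleton_self B)]; exact htbB'⟩
    set t0 : Tuple S := fun C => S.null C with ht0
    set w : S.Dom A × S.Dom B → Tuple S := fun p =>
      if h : p ∈ colVals S r A ×ˢ colVals S r B then (hwit p h).choose else t0 with hw
    have hwspec : ∀ p ∈ colVals S r A ×ˢ colVals S r B,
        w p ∈ r' ∧ w p A = p.1 ∧ w p B = p.2 := by
      intro p hp
      rw [hw]; simp only [dif_pos hp]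
      obtain ⟨h1, h2⟩ := (hwit p hp).choose_spec
      exact ⟨h1, h2⟩
    set sP : Multiset (S.Dom A × S.Dom B) := (colVals S r A ×ˢ colVals S r B).val with hsP
    have hsPmem : ∀ p, p ∈ sP ↔ p ∈ colVals S r A ×ˢ colVals S r B := fun p => Iff.rfl
    have hWle : sP.map w ≤ r' := by
      rw [Multiset.le_iff_count]
      intro v
      by_cases hv : v ∈ sP.map w
      · obtain ⟨p, hpmem, hpv⟩ := Multiset.mem_map.mp hv
        have hv1 : Multiset.count v (sP.map w) ≤ 1 := by
          rw [Multiset.count_map, ← Finset.filter_val, ← Finset.card_def]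
          apply Finset.card_le_one.mpr
          intro x hx y hy
          rw [Finset.mem_filter] at hx hy
          obtain ⟨hx1, hx2⟩ := hx
          obtain ⟨hy1, hy2⟩ := hy
          obtain ⟨-, hxA, hxB⟩ := hwspec x hx1
          obtain ⟨-, hyA, hyB⟩ := hwspec y hy1
          have : (x.1, x.2) = (y.1, y.2) := by
            rw [← hxA, ← hxB, ← hyA, ← hyB, ← hx2, ← hy2]
          simpa using this
        have hv2 : 1 ≤ Multiset.count v r' := by
          rw [Nat.one_le_iff_ne_zero, Ne, Multiset.count_eq_zero, not_not, ← hpv]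
          exact (hwspec p hpmem).1
        exact le_trans hv1 hv2
      · rw [Multiset.count_eq_zero_of_notMem hv]; exact Nat.zero_le _
    obtain ⟨Qm, hQle, hQrel⟩ := PIAaux.rel_exists_le hgr _ hWle
    obtain ⟨f, rfl, hfspec⟩ :=
      PIAaux.rel_map_exists_fun (fun _ => t0) sP (colVals S r A ×ˢ colVals S r B).nodup hQrel
    refine ⟨fun a b => f (a, b), ?_, ?_⟩
    · intro a ha b hb
      have hp : (a, b) ∈ sP := Finset.mem_product.mpr ⟨ha, hb⟩
      have hgt := hfspec (a, b) hp
      obtain ⟨hwmem, hwA, hwB⟩ := hwspec (a, b) hp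
      refine ⟨Multiset.mem_of_le hQle (Multiset.mem_map_of_mem f hp), ?_, ?_⟩
      · by_cases h : f (a, b) A = S.null A
        · exact Or.inr h
        · exact Or.inl (by show f (a, b) A = a; rw [← hgt.2 A h]; exact hwA)
      · by_cases h : f (a, b) B = S.null B
        · exact Or.inr h
        · exact Or.inl (by show f (a, b) B = b; rw [← hgt.2 B h]; exact hwB)
    · intro t ht
      have hcount := Multiset.le_iff_count.mp hQle t
      rw [Multiset.count_map] at hcount
      refine le_trans (le_of_eq ?_) hcount
      rw [Finset.card_def, Finset.filter_val]
      congr 1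
      apply Multiset.filter_congr
      intro p _
      constructor
      · intro h; rw [← h]
      · intro h; rw [h]
  · rintro ⟨g, hg1, hg2⟩
    obtain ⟨nn, hnn⟩ : ∃ nn : ∀ C, S.Dom C, ∀ C, nn C ≠ S.null C := by
      refine ⟨fun C => (S.two_nonnull C).choose, fun C => ?_⟩
      obtain ⟨y, hx, hy, hxy⟩ := (S.two_nonnull C).choose_spec
      exact hx
    set NA := colVals S r A with hNAdef
    set NB := colVals S r B with hNBdef
    set a0 : S.Dom A := if h : NA.Nonempty then h.choose else nn A with ha0def
    set b0 : S.Dom B := if h : NB.Nonempty then h.choose else nn B with hb0def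
    have ha0mem : NA.Nonempty → a0 ∈ NA := by
      intro h; rw [ha0def, dif_pos h]; exact h.choose_spec
    have hb0mem : NB.Nonempty → b0 ∈ NB := by
      intro h; rw [hb0def, dif_pos h]; exact h.choose_spec
    have ha0ne : a0 ≠ S.null A := by
      by_cases h : NA.Nonempty
      · exact ((mem_colVals A a0).mp (ha0mem h)).1
      · rw [ha0def, dif_neg h]; exact hnn A
    have hb0ne : b0 ≠ S.null B := by
      by_cases h : NB.Nonempty
      · exact ((mem_colVals B b0).mp (hb0mem h)).1
      · rw [hb0def, dif_neg h]; exact hnn B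
    set cA : S.Dom A → S.Dom A := fun x => if x = S.null A then a0 else x with hcAdef
    set cB : S.Dom B → S.Dom B := fun x => if x = S.null B then b0 else x with hcBdef
    have hcAne : ∀ x, cA x ≠ S.null A := by
      intro x; rw [hcAdef]; dsimp only; split
      · exact ha0ne
      · assumption
    have hcBne : ∀ x, cB x ≠ S.null B := by
      intro x; rw [hcBdef]; dsimp only; split
      · exact hb0ne
      · assumption
    have hcAid : ∀ x, x ≠ S.null A → cA x = x := by
      intro x hx; rw [hcAdef]; simp [hx]
    have hcBid : ∀ x, x ≠ S.null B → cB x = x := by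
      intro x hx; rw [hcBdef]; simp [hx]
    have hcA0 : ∀ x, x = S.null A → cA x = a0 := by
      intro x hx; rw [hcAdef]; simp [hx]
    have hcB0 : ∀ x, x = S.null B → cB x = b0 := by
      intro x hx; rw [hcBdef]; simp [hx]
    set Gbase : Tuple S → Tuple S := fun t C => if t C = S.null C then nn C else t C with hGbdef
    have hGbne : ∀ t C, Gbase t C ≠ S.null C := by
      intro t C; rw [hGbdef]; dsimp only; split
      · exact hnn C
      · assumption
    have hGbid : ∀ t C, t C ≠ S.null C → Gbase t C = t C := by
      intro t C h; rw [hGbdef]; simp [h]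
    set F : S.Dom A × S.Dom B → Tuple S :=
      fun p => Function.update (Function.update (Gbase (g p.1 p.2)) A p.1) B p.2 with hFdef
    set Gd : Tuple S → Tuple S :=
      fun t => Function.update (Function.update (Gbase t) A (cA (t A))) B (cB (t B)) with hGddef
    have hFA : ∀ p, F p A = p.1 := by
      intro p; rw [hFdef]; dsimp only
      rw [Function.update_of_ne hAB, Function.update_self]
    have hFB : ∀ p, F p B = p.2 := by
      intro p; rw [hFdef]; dsimp only
      rw [Function.update_self]
    have hFother : ∀ p C, C ≠ A → C ≠ B → F p C = Gbase (g p.1 p.2) C := by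
      intro p C hCA hCB; rw [hFdef]; dsimp only
      rw [Function.update_of_ne hCB, Function.update_of_ne hCA]
    have hGdA : ∀ t, Gd t A = cA (t A) := by
      intro t; rw [hGddef]; dsimp only
      rw [Function.update_of_ne hAB, Function.update_self]
    have hGdB : ∀ t, Gd t B = cB (t B) := by
      intro t; rw [hGddef]; dsimp only
      rw [Function.update_self]
    have hGdother : ∀ t C, C ≠ A → C ≠ B → Gd t C = Gbase t C := by
      intro t C hCA hCB; rw [hGddef]; dsimp only
      rw [Function.update_of_ne hCB, Function.update_of_ne hCA]
    set sP : Multiset (S.Dom A × S.Dom B) := (NA ×ˢ NB).val with hsPdef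
    set Q : DBRel S := sP.map (fun p => g p.1 p.2) with hQdef
    set P : DBRel S := sP.map F with hPdef
    -- Q is a sub-multiset of r
    have hQr : Q ≤ r := by
      rw [Multiset.le_iff_count]
      intro t
      by_cases ht : t ∈ r
      · have hb := hg2 t ht
        rw [hQdef, Multiset.count_map]
        refine le_trans (le_of_eq ?_) hb
        rw [Finset.card_def, Finset.filter_val, hsPdef]
        congr 1
        apply Multiset.filter_congr
        intro p _
        constructor
        · intro h; rw [← h]
        · intro h; rw [h]
      · have : Multiset.count t Q = 0 := by
          rw [Multiset.count_eq_zero]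
          intro hmem
          obtain ⟨p, hp, hpt⟩ := Multiset.mem_map.mp hmem
          have hp' := Finset.mem_product.mp hp
          exact ht (hpt ▸ (hg1 p.1 hp'.1 p.2 hp'.2).1)
        rw [this]; exact Nat.zero_le _
    -- groundings
    have hgtF : ∀ p ∈ sP, groundsTuple S (F p) (g p.1 p.2) := by
      intro p hp
      obtain ⟨hp1, hp2⟩ := Finset.mem_product.mp hp
      have hp1ne := ((mem_colVals A p.1).mp hp1).1
      have hp2ne := ((mem_colVals B p.2).mp hp2).1
      constructor
      · intro C
        rcases eq_or_ne C B with rfl | hCB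
        · rw [hFB]; exact hp2ne
        · rcases eq_or_ne C A with rfl | hCA
          · rw [hFA]; exact hp1ne
          · rw [hFother p C hCA hCB]; exact hGbne _ C
      · intro C hC
        rcases eq_or_ne C B with rfl | hCB
        · rw [hFB]
          rcases (hg1 p.1 hp1 p.2 hp2).2.2 with h | h
          · exact h.symm
          · exact absurd h hC
        · rcases eq_or_ne C A with rfl | hCA
          · rw [hFA]
            rcases (hg1 p.1 hp1 p.2 hp2).2.1 with h | h
            · exact h.symm
            · exact absurd h hC
          · rw [hFother p C hCA hCB]; exact hGbid _ C hC
    have hgtGd : ∀ t : Tuple S, groundsTuple S (Gd t) t := by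
      intro t
      constructor
      · intro C
        rcases eq_or_ne C B with rfl | hCB
        · rw [hGdB]; exact hcBne _
        · rcases eq_or_ne C A with rfl | hCA
          · rw [hGdA]; exact hcAne _
          · rw [hGdother t C hCA hCB]; exact hGbne t C
      · intro C hC
        rcases eq_or_ne C B with rfl | hCB
        · rw [hGdB]; exact hcBid _ hC
        · rcases eq_or_ne C A with rfl | hCA
          · rw [hGdA]; exact hcAid _ hC
          · rw [hGdother t C hCA hCB]; exact hGbid t C hC
    have hrel : Multiset.Rel (groundsTuple S) (P + (r - Q).map Gd) (Q + (r - Q)) := by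
      apply Multiset.Rel.add
      · rw [hPdef, hQdef, Multiset.rel_map]
        exact Multiset.rel_refl_of_refl_on hgtF
      · rw [Multiset.rel_map_left]
        exact Multiset.rel_refl_of_refl_on fun t _ => hgtGd t
    have hground : grounds S (P + (r - Q).map Gd) r := by
      have heq : Q + (r - Q) = r := add_tsub_cancel_of_le hQr
      rwa [heq] at hrel
    refine ⟨P + (r - Q).map Gd, hground, ?_, ?_⟩
    · -- completeness
      intro t' ht' C _
      rcases Multiset.mem_add.mp ht' with h | h
      · obtain ⟨p, hp, rfl⟩ := Multiset.mem_map.mp h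
        exact (hgtF p hp).1 C
      · obtain ⟨t, _, rfl⟩ := Multiset.mem_map.mp h
        exact (hgtGd t).1 C
    · -- product condition
      intro t1 ht1 t2 ht2
      by_cases hNA : NA.Nonempty
      · by_cases hNB : NB.Nonempty
        · have key1 : ∀ t' ∈ P + (r - Q).map Gd, t' A ∈ NA := by
            intro t' ht'
            rcases Multiset.mem_add.mp ht' with h | h
            · obtain ⟨p, hp, rfl⟩ := Multiset.mem_map.mp h
              rw [hFA]; exact (Finset.mem_product.mp hp).1
            · obtain ⟨t, ht, rfl⟩ := Multiset.mem_map.mp h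
              have htr : t ∈ r := Multiset.mem_of_le tsub_le_self ht
              rw [hGdA]
              by_cases hn : t A = S.null A
              · rw [hcA0 _ hn]; exact ha0mem hNA
              · rw [hcAid _ hn]
                exact (mem_colVals A (t A)).mpr ⟨hn, t, htr, rfl⟩
          have key2 : ∀ t' ∈ P + (r - Q).map Gd, t' B ∈ NB := by
            intro t' ht'
            rcases Multiset.mem_add.mp ht' with h | h
            · obtain ⟨p, hp, rfl⟩ := Multiset.mem_map.mp h
              rw [hFB]; exact (Finset.mem_product.mp hp).2
            · obtain ⟨t, ht, rfl⟩ := Multiset.mem_map.mp h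
              have htr : t ∈ r := Multiset.mem_of_le tsub_le_self ht
              rw [hGdB]
              by_cases hn : t B = S.null B
              · rw [hcB0 _ hn]; exact hb0mem hNB
              · rw [hcBid _ hn]
                exact (mem_colVals B (t B)).mpr ⟨hn, t, htr, rfl⟩
          have hp : (t1 A, t2 B) ∈ sP :=
            Finset.mem_product.mpr ⟨key1 t1 ht1, key2 t2 ht2⟩
          refine ⟨F (t1 A, t2 B),
            Multiset.mem_add.mpr (Or.inl (Multiset.mem_map_of_mem F hp)), ?_, ?_⟩
          · intro C hC
            rw [Finset.mem_singleton] at hC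
            subst hC
            exact hFA _
          · intro C hC
            rw [Finset.mem_singleton] at hC
            subst hC
            exact hFB _
        · have hNBe : NB = ∅ := Finset.not_nonempty_iff_eq_empty.mp hNB
          have keyB : ∀ t' ∈ P + (r - Q).map Gd, t' B = b0 := by
            intro t' ht'
            rcases Multiset.mem_add.mp ht' with h | h
            · exfalso
              obtain ⟨p, hp, rfl⟩ := Multiset.mem_map.mp h
              have hmem := (Finset.mem_product.mp hp).2
              rw [hNBe] at hmem
              exact absurd hmem (Finset.notMem_empty _)
            · obtain ⟨t, ht, rfl⟩ := Multiset.mem_map.mp h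
              have htr : t ∈ r := Multiset.mem_of_le tsub_le_self ht
              have hn : t B = S.null B := by
                by_contra hn
                have hmem : t B ∈ NB := (mem_colVals B (t B)).mpr ⟨hn, t, htr, rfl⟩
                rw [hNBe] at hmem
                exact absurd hmem (Finset.notMem_empty _)
              rw [hGdB, hcB0 _ hn]
          refine ⟨t1, ht1, fun C _ => rfl, ?_⟩
          intro C hC
          rw [Finset.mem_singleton] at hC
          subst hC
          rw [keyB t1 ht1, keyB t2 ht2]
      · have hNAe : NA = ∅ := Finset.not_nonempty_iff_eq_empty.mp hNA
        have keyA : ∀ t' ∈ P + (r - Q).map Gd, t' A = a0 := by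
          intro t' ht'
          rcases Multiset.mem_add.mp ht' with h | h
          · exfalso
            obtain ⟨p, hp, rfl⟩ := Multiset.mem_map.mp h
            have hmem := (Finset.mem_product.mp hp).1
            rw [hNAe] at hmem
            exact absurd hmem (Finset.notMem_empty _)
          · obtain ⟨t, ht, rfl⟩ := Multiset.mem_map.mp h
            have htr : t ∈ r := Multiset.mem_of_le tsub_le_self ht
            have hn : t A = S.null A := by
              by_contra hn
              have hmem : t A ∈ NA := (mem_colVals A (t A)).mpr ⟨hn, t, htr, rfl⟩
              rw [hNAe] at hmem
              exact absurd hmem (Finset.notMem_empty _)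
            rw [hGdA, hcA0 _ hn]
        refine ⟨t2, ht2, ?_, fun C _ => rfl⟩
        intro C hC
        rw [Finset.mem_singleton] at hC
        subst hC
        rw [keyA t1 ht1, keyA t2 ht2]
end

section
/- The exchange rule is sound for certain independence atoms: for every relation r over a relation schema R and all X, Y, Z ⊆ R, if r satisfies X⊥_c Y and r satisfies XY⊥_c Z, then r satisfies X⊥_c YZ. -/
variable {Attr : Type} [DecidableEq Attr]

/-- The exchange rule is sound for certain independence atoms. -/
theorem cia_exchange_sound [Fintype Attr] (S : Schema Attr) (r : DBRel S)
    (X Y Z : Finset Attr) (h1 : satCIA S r X Y) (h2 : satCIA S r (X ∪ Y) Z) :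
    satCIA S r X (Y ∪ Z) := by
  intro r' hg
  obtain ⟨c1, i1⟩ := h1 r' hg
  obtain ⟨c2, i2⟩ := h2 r' hg
  constructor
  · intro t ht A hA
    rcases Finset.mem_union.1 hA with h | h
    · exact c1 t ht A (Finset.mem_union_left _ h)
    · rcases Finset.mem_union.1 h with h | h
      · exact c1 t ht A (Finset.mem_union_right _ h)
      · exact c2 t ht A (Finset.mem_union_right _ h)
  · intro t1 ht1 t2 ht2
    obtain ⟨t3, ht3, a3X, a3Y⟩ := i1 t1 ht1 t2 ht2
    obtain ⟨t, ht, aXY, aZ⟩ := i2 t3 ht3 t2 ht2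
    refine ⟨t, ht, ?_, ?_⟩
    · intro A hA
      exact (aXY A (Finset.mem_union_left _ hA)).trans (a3X A hA)
    · intro A hA
      rcases Finset.mem_union.1 hA with h | h
      · exact (aXY A (Finset.mem_union_right _ h)).trans (a3Y A h)
      · exact aZ A h
end

section
/- The mixed exchange rule E_{p&c} is sound: for every relation r over a relation schema R and all X, Y, Z ⊆ R, if r satisfies X⊥_p Y and r satisfies XY⊥_c Z, then r satisfies X⊥_p YZ. -/
variable {Attr : Type} [DecidableEq Attr]

/-- The mixed exchange rule E_{p&c} is sound. -/
theorem mixed_exchange_pc_sound [Fintype Attr] (S : Schema Attr) (r : DBRel S)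
    (X Y Z : Finset Attr) (h1 : satPIA S r X Y) (h2 : satCIA S r (X ∪ Y) Z) :
    satPIA S r X (Y ∪ Z) := by
  obtain ⟨r', hg, hc1, hind1⟩ := h1
  obtain ⟨hc2, hind2⟩ := h2 r' hg
  refine ⟨r', hg, ?_, ?_⟩
  · intro t ht A hA
    exact hc2 t ht A (by rw [Finset.union_assoc]; exact hA)
  · intro t1 h1' t2 h2'
    obtain ⟨u, hu, huX, huY⟩ := hind1 t1 h1' t2 h2'
    obtain ⟨t, ht, htXY, htZ⟩ := hind2 u hu t2 h2'
    refine ⟨t, ht, ?_, ?_⟩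
    · intro A hA
      rw [htXY A (Finset.mem_union_left _ hA), huX A hA]
    · intro A hA
      rcases Finset.mem_union.mp hA with h | h
      · rw [htXY A (Finset.mem_union_right _ h), huY A h]
      · exact htZ A h
end

section
/- The mixed exchange rule E_{c&p} is sound: for every relation r over a relation schema R and all X, Y, Z ⊆ R, if r satisfies X⊥_c Y and r satisfies XY⊥_p Z, then r satisfies X⊥_p YZ. -/
variable {Attr : Type} [DecidableEq Attr]

/-- The mixed exchange rule E_{c&p} is sound. -/
theorem mixed_exchange_cp_sound [Fintype Attr] (S : Schema Attr) (r : DBRel S)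
    (X Y Z : Finset Attr) (h1 : satCIA S r X Y) (h2 : satPIA S r (X ∪ Y) Z) :
    satPIA S r X (Y ∪ Z) := by
  obtain ⟨r', hg, hcompXYZ, hXYZ⟩ := h2
  obtain ⟨hcompXY, hXY⟩ := h1 r' hg
  refine ⟨r', hg, ?_, ?_⟩
  · intro t ht A hA
    rcases Finset.mem_union.1 hA with hA | hA
    · exact hcompXY t ht A (Finset.mem_union_left Y hA)
    rcases Finset.mem_union.1 hA with hA | hA
    · exact hcompXY t ht A (Finset.mem_union_right X hA)
    · exact hcompXYZ t ht A (Finset.mem_union_right _ hA)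
  · intro t1 ht1 t2 ht2
    obtain ⟨s, hs, hsX, hsY⟩ := hXY t1 ht1 t2 ht2
    obtain ⟨t, ht, htXY, htZ⟩ := hXYZ s hs t2 ht2
    refine ⟨t, ht, ?_, ?_⟩
    · intro A hA
      rw [htXY A (Finset.mem_union_left Y hA)]
      exact hsX A hA
    · intro A hA
      rcases Finset.mem_union.1 hA with hA | hA
      · rw [htXY A (Finset.mem_union_right X hA)]
        exact hsY A hA
      · exact htZ A hA
end

section
/- The decomposition rule is sound for possible independence atoms: for every relation r over a relation schema R and all X, Y, Z ⊆ R, if r satisfies X⊥_p YZ then r satisfies X⊥_p Y. -/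
variable {Attr : Type} [DecidableEq Attr]

/-- The decomposition rule is sound for possible independence atoms. -/
theorem pia_decomposition_sound [Fintype Attr] (S : Schema Attr) (r : DBRel S)
    (X Y Z : Finset Attr) (h : satPIA S r X (Y ∪ Z)) :
    satPIA S r X Y := by
  obtain ⟨r', hg, hc, hi⟩ := h
  refine ⟨r', hg, fun t ht A hA => hc t ht A ?_, fun t1 h1 t2 h2 => ?_⟩
  · rcases Finset.mem_union.1 hA with h | h
    · exact Finset.mem_union_left _ h
    · exact Finset.mem_union_right _ (Finset.mem_union_left _ h)
  · obtain ⟨t, ht, hx, hy⟩ := hi t1 h1 t2 h2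
    exact ⟨t, ht, hx, fun A hA => hy A (Finset.mem_union_left _ hA)⟩
end
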